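/- arXiv:2602.03993 — 9 statements merged into one kernel-verified Lean document; each statement's English description precedes it below -/
import Mathlib

section
/- Let F be an algebraically closed field of characteristic ≠ 2, V an infinite-dimensional vector space over F with a nondegenerate quadratic form Q, and φ : V → V an orthogonal linear transformation. If φ is finitary and either φ = Id or det(φ|_{V/V(1)}) = 1, then the Bogolyubov automorphism [φ] of Cl(V,Q) is inner. -/
/-- The eigenspace `V(α) = ker (φ - α·Id)` of a linear operator `φ`. -/
noncomputable def eigSp {F V : Type*} [Field F] [AddCommGroup V] [Module F V]
    (φ : V →ₗ[F] V) (α : F) : Submodule F V :=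
  LinearMap.ker (φ - α • LinearMap.id)

/-- The eigenspace `V(α)` is `φ`-invariant, so `φ` induces a linear map on the
quotient `V / V(α)`. -/
noncomputable def quotMap {F V : Type*} [Field F] [AddCommGroup V] [Module F V]
    (φ : V →ₗ[F] V) (α : F) : (V ⧸ eigSp φ α) →ₗ[F] (V ⧸ eigSp φ α) :=
  Submodule.mapQ _ _ φ (by
    intro v hv
    simp only [eigSp, LinearMap.mem_ker, LinearMap.sub_apply, LinearMap.smul_apply,
      LinearMap.id_coe, id_eq, sub_eq_zero, Submodule.mem_comap] at hv ⊢
    rw [hv, map_smul, hv])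


/-!
Since `V(1)` has finite codimension, `φ - 1` has finite rank, and its range lies in a
finite-dimensional subspace `W` on which `Q` is nondegenerate. Cartan–Dieudonné relative to `W`
writes `φ` as a product of reflections `r_{w₁} ⋯ r_{wₖ}` in anisotropic vectors of `W`, and
conjugation by `w₁ ⋯ wₖ` in the Clifford algebra acts on `V` as `(-1)ᵏ φ`. As `φ` is the
identity on `V(1)` and modulo `W`, `(-1)ᵏ = det (φ|_W) = det (φ|_{V/V(1)}) = 1`, so `k` is even
and `[φ]` is conjugation by `w₁ ⋯ wₖ`.
-/

open QuadraticMap Module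

section Reflection

variable {F V : Type*} [Field F] [AddCommGroup V] [Module F V] (Q : QuadraticForm F V)

/-- The reflection `v ↦ v - (polar Q w v / Q w) • w`; the identity when `Q w = 0`. -/
noncomputable def reflect (w : V) : Module.End F V :=
  preReflection w ((Q w)⁻¹ • polarBilin Q w)

theorem reflect_apply (w v : V) : reflect Q w v = v - ((Q w)⁻¹ * polar Q w v) • w :=
  preReflection_apply _ _ _

theorem reflect_sub_self (w v : V) : reflect Q w v - v = -(((Q w)⁻¹ * polar Q w v) • w) := by
  rw [reflect_apply, sub_sub_cancel_left]

variable {Q}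

theorem polarDual_apply_self {w : V} (hw : Q w ≠ 0) : ((Q w)⁻¹ • polarBilin Q w) w = 2 := by
  simp only [LinearMap.smul_apply, polarBilin_apply_apply, polar_self, two_nsmul, smul_eq_mul]
  field_simp
  ring

theorem reflect_self {w : V} (hw : Q w ≠ 0) : reflect Q w w = -w :=
  preReflection_apply_self (polarDual_apply_self hw)

theorem reflect_mul_self {w : V} (hw : Q w ≠ 0) : reflect Q w * reflect Q w = 1 :=
  LinearMap.ext (involutive_preReflection (polarDual_apply_self hw))

theorem map_reflect {w : V} (hw : Q w ≠ 0) (v : V) : Q (reflect Q w v) = Q v := by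
  rw [reflect_apply, sub_eq_add_neg, ← neg_smul, QuadraticMap.map_add Q, QuadraticMap.map_smul,
    polar_smul_right, polar_comm, smul_eq_mul, smul_eq_mul]
  field_simp
  ring

theorem reflect_sub_apply {x y : V} (hxy : Q x = Q y) (h : Q (x - y) ≠ 0) :
    reflect Q (x - y) x = y := by
  have : polar Q (x - y) x = Q (x - y) := by
    rw [polar_sub_left, polar_self, polar_comm, sub_eq_add_neg x y, QuadraticMap.map_add Q,
      QuadraticMap.map_neg, polar_neg_right, hxy, two_nsmul]
    ring
  rw [reflect_apply, this, inv_mul_cancel₀ h, one_smul, sub_sub_cancel]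

theorem reflect_add_apply {x y : V} (hxy : Q x = Q y) (h : Q (x + y) ≠ 0) :
    reflect Q (x + y) x = -y := by
  have : polar Q (x + y) x = Q (x + y) := by
    rw [polar_add_left, polar_self, polar_comm, QuadraticMap.map_add Q, hxy, two_nsmul]
  rw [reflect_apply, this, inv_mul_cancel₀ h, one_smul, sub_add_cancel_left]

end Reflection

section ReflectionProduct

variable {F V : Type*} [Field F] [AddCommGroup V] [Module F V] (Q : QuadraticForm F V)

noncomputable def reflectProd (l : List V) : Module.End F V :=
  (l.map (reflect Q)).prod

@[simp]
theorem reflectProd_nil : reflectProd Q [] = 1 := rfl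

@[simp]
theorem reflectProd_cons (w : V) (l : List V) :
    reflectProd Q (w :: l) = reflect Q w * reflectProd Q l := rfl

theorem reflectProd_append (l₁ l₂ : List V) :
    reflectProd Q (l₁ ++ l₂) = reflectProd Q l₁ * reflectProd Q l₂ := by
  simp [reflectProd]

variable {Q}

theorem map_reflectProd {l : List V} (hl : ∀ w ∈ l, Q w ≠ 0) (v : V) :
    Q (reflectProd Q l v) = Q v := by
  induction l with
  | nil => rfl
  | cons w l ih =>
    simp only [List.forall_mem_cons] at hl
    rw [reflectProd_cons, Module.End.mul_apply, map_reflect hl.1, ih hl.2]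

theorem reflectProd_sub_self_mem {W : Submodule F V} {l : List V} (hl : ∀ w ∈ l, w ∈ W)
    (v : V) : reflectProd Q l v - v ∈ W := by
  induction l with
  | nil => simp
  | cons w l ih =>
    simp only [List.forall_mem_cons] at hl
    rw [reflectProd_cons, Module.End.mul_apply, ← sub_add_sub_cancel _ (reflectProd Q l v),
      reflect_sub_self]
    exact W.add_mem (W.neg_mem (W.smul_mem _ hl.1)) (ih hl.2)

theorem reflectProd_reverse_mul_self {l : List V} (hl : ∀ w ∈ l, Q w ≠ 0) :
    reflectProd Q l.reverse * reflectProd Q l = 1 := by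
  induction l with
  | nil => rfl
  | cons w l ih =>
    simp only [List.forall_mem_cons] at hl
    rw [List.reverse_cons, reflectProd_append, reflectProd_cons, reflectProd_cons,
      reflectProd_nil, mul_one, mul_assoc, ← mul_assoc (reflect Q w), reflect_mul_self hl.1,
      one_mul, ih hl.2]

end ReflectionProduct

section Clifford

open CliffordAlgebra

variable {F V : Type*} [Field F] [AddCommGroup V] [Module F V] {Q : QuadraticForm F V}

theorem exists_units_conj_ι_eq_neg_reflect {w : V} (hw : Q w ≠ 0) :
    ∃ x : (CliffordAlgebra Q)ˣ, ∀ v, ↑x * ι Q v * ↑x⁻¹ = -ι Q (reflect Q w v) := by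
  let := invertibleOfNonzero hw
  let := invertibleιOfInvertible Q w
  refine ⟨unitOfInvertible (ι Q w), fun v => ?_⟩
  rw [← map_neg, reflect_apply, neg_sub, ← invOf_eq_inv]
  exact ι_mul_ι_mul_invOf_ι Q w v

theorem exists_units_conj_ι_eq_reflectProd {l : List V} (hl : ∀ w ∈ l, Q w ≠ 0) :
    ∃ x : (CliffordAlgebra Q)ˣ, ∀ v,
      ↑x * ι Q v * ↑x⁻¹ = (-1 : F) ^ l.length • ι Q (reflectProd Q l v) := by
  induction l with
  | nil => exact ⟨1, fun v => by simp⟩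
  | cons w l ih =>
    simp only [List.forall_mem_cons] at hl
    obtain ⟨y, hy⟩ := exists_units_conj_ι_eq_neg_reflect hl.1
    obtain ⟨x, hx⟩ := ih hl.2
    refine ⟨y * x, fun v => ?_⟩
    calc ↑(y * x) * ι Q v * ↑(y * x)⁻¹ = ↑y * (↑x * ι Q v * ↑x⁻¹) * ↑y⁻¹ := by
          simp only [mul_inv_rev, Units.val_mul, mul_assoc]
      _ = _ := by
          rw [hx, mul_smul_comm, smul_mul_assoc, hy, reflectProd_cons, Module.End.mul_apply,
            List.length_cons, pow_succ, mul_neg_one, neg_smul, smul_neg]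

theorem eq_conj_of_apply_ι {θ : CliffordAlgebra Q ≃ₐ[F] CliffordAlgebra Q}
    (x : (CliffordAlgebra Q)ˣ) (h : ∀ v, θ (ι Q v) = ↑x * ι Q v * ↑x⁻¹) (a : CliffordAlgebra Q) :
    θ a = ↑x * a * ↑x⁻¹ := by
  have : θ.toAlgHom = (MulSemiringAction.toAlgEquiv F _ (ConjAct.toConjAct x)).toAlgHom :=
    hom_ext <| LinearMap.ext fun v => by simp [h, ConjAct.units_smul_def]
  simpa [ConjAct.units_smul_def] using congr($this a)

end Clifford

section Determinant

open LinearMap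

theorem Submodule.le_comap_of_forall_sub_mem {R M : Type*} [Ring R] [AddCommGroup M] [Module R M]
    {p : Submodule R M} {f : M →ₗ[R] M} (h : ∀ x, f x - x ∈ p) : p ≤ p.comap f :=
  fun x hx => by simpa using p.add_mem (h x) hx

variable {F M N : Type*} [Field F] [AddCommGroup M] [Module F M] [AddCommGroup N] [Module F N]
  [FiniteDimensional F M]

theorem LinearMap.det_eq_det_restrict_of_forall_sub_mem {f : Module.End F M} {p : Submodule F M}
    (hp : p ≤ p.comap f) (h : ∀ x, f x - x ∈ p) :
    LinearMap.det f = LinearMap.det (f.restrict hp) := by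
  have hq : p.mapQ p f hp = id := Submodule.linearMap_qext _ <| LinearMap.ext fun x => by
    simpa [Submodule.Quotient.eq] using h x
  rw [det_eq_det_mul_det p f hp, hq, det_id, mul_one]

theorem LinearMap.det_eq_det_of_comp_eq_comp {f : Module.End F M} {f' : Module.End F N}
    {g : M →ₗ[F] N} (hg : Function.Surjective g) (hcomm : g ∘ₗ f = f' ∘ₗ g)
    (hfix : ∀ x ∈ ker g, f x = x) : LinearMap.det f = LinearMap.det f' := by
  have hker : ker g ≤ (ker g).comap f := fun x hx => by simpa [hfix x hx] using hx
  set e := g.quotKerEquivOfSurjective hg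
  have hrestrict : f.restrict hker = id := LinearMap.ext fun x => Subtype.ext (hfix x x.2)
  have hconj : e.conj ((ker g).mapQ _ f hker) = f' := by
    ext y
    obtain ⟨x, rfl⟩ := hg y
    have hx : e.symm (g x) = Submodule.Quotient.mk x := e.symm_apply_eq.mpr rfl
    have hfx : g (f x) = f' (g x) := congr($hcomm x)
    simp [LinearEquiv.conj_apply, hx, e, hfx]
  rw [det_eq_det_mul_det (ker g) f hker, hrestrict, det_id, one_mul, ← hconj]
  exact (det_conj _ e).symm

end Determinant

section DeterminantOnSubspace

variable {F V : Type*} [Field F] [AddCommGroup V] [Module F V] {Q : QuadraticForm F V}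
  {W : Submodule F V} [FiniteDimensional F W]

theorem det_restrict_reflect {w : V} (hwW : w ∈ W) (hw : Q w ≠ 0)
    (h : W ≤ W.comap (reflect Q w)) : LinearMap.det ((reflect Q w).restrict h) = -1 := by
  set f := (reflect Q w).restrict h
  set L := F ∙ (⟨w, hwW⟩ : W)
  have hfL : ∀ x, f x - x ∈ L := fun x => Submodule.mem_span_singleton.mpr
    ⟨-((Q w)⁻¹ * polar Q w x), Subtype.ext <| by simp [f, reflect_sub_self]⟩
  have hL := Submodule.le_comap_of_forall_sub_mem hfL
  have hneg : LinearMap.restrict (p := L) (q := L) f hL = (-1 : F) • LinearMap.id := by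
    ext ⟨y, hy⟩
    obtain ⟨c, rfl⟩ := Submodule.mem_span_singleton.mp hy
    simp [f, reflect_self hw]
  have hrank : Module.finrank F L = 1 :=
    finrank_span_singleton fun h0 => hw (by simpa using congr(Q ($h0 : V)))
  rw [LinearMap.det_eq_det_restrict_of_forall_sub_mem hL hfL, hneg, LinearMap.det_smul, hrank,
    LinearMap.det_id, pow_one, mul_one]

theorem det_restrict_reflectProd {l : List V} (hl : ∀ w ∈ l, w ∈ W ∧ Q w ≠ 0)
    (h : W ≤ W.comap (reflectProd Q l)) :
    LinearMap.det ((reflectProd Q l).restrict h) = (-1) ^ l.length := by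
  induction l with
  | nil =>
    rw [List.length_nil, pow_zero]
    exact LinearMap.det_id
  | cons w l ih =>
    simp only [List.forall_mem_cons] at hl
    have hw : W ≤ W.comap (reflect Q w) :=
      Submodule.le_comap_of_forall_sub_mem (reflectProd_sub_self_mem (Q := Q) (l := [w])
        (by simpa using hl.1.1))
    have hl' : W ≤ W.comap (reflectProd Q l) :=
      Submodule.le_comap_of_forall_sub_mem (reflectProd_sub_self_mem fun v hv => (hl.2 v hv).1)
    rw [show (reflectProd Q (w :: l)).restrict h = (reflect Q w).restrict hw ∘ₗ
      (reflectProd Q l).restrict hl' from rfl, LinearMap.det_comp,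
      det_restrict_reflect hl.1.1 hl.1.2, ih (fun v hv => hl.2 v hv) hl', List.length_cons,
      pow_succ']

theorem det_restrict_eq_det_quotMap {φ : V →ₗ[F] V} [FiniteDimensional F (V ⧸ eigSp φ 1)]
    (hφW : ∀ x, φ x - x ∈ W) (h : W ≤ W.comap φ) :
    LinearMap.det (φ.restrict h) = LinearMap.det (quotMap φ 1) := by
  set K := eigSp φ 1
  set T := W.map K.mkQ
  have hT : ∀ z, quotMap φ 1 z - z ∈ T := by
    rintro ⟨x⟩
    exact ⟨φ x - x, hφW x, rfl⟩
  set g : W →ₗ[F] T := (K.mkQ ∘ₗ W.subtype).codRestrict T fun x => ⟨x, x.2, rfl⟩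
  have hg : Function.Surjective g := by
    rintro ⟨_, x, hx, rfl⟩
    exact ⟨⟨x, hx⟩, rfl⟩
  have hfix : ∀ x ∈ LinearMap.ker g, φ.restrict h x = x := fun x hx => Subtype.ext <| by
    have : (x : V) ∈ K := (Submodule.Quotient.mk_eq_zero K).mp congr(($hx : V ⧸ K))
    simpa [K, eigSp, sub_eq_zero] using this
  rw [LinearMap.det_eq_det_restrict_of_forall_sub_mem (Submodule.le_comap_of_forall_sub_mem hT) hT]
  exact LinearMap.det_eq_det_of_comp_eq_comp hg rfl hfix

end DeterminantOnSubspace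

section PolarRadical

variable {F V : Type*} [Field F] [AddCommGroup V] [Module F V] {Q : QuadraticForm F V}

variable (Q) in
noncomputable def polarRadical (W : Submodule F V) : Submodule F V :=
  W ⊓ LinearMap.BilinForm.orthogonal (polarBilin Q) W

theorem mem_polarRadical {W : Submodule F V} {x : V} :
    x ∈ polarRadical Q W ↔ x ∈ W ∧ ∀ y ∈ W, polar Q y x = 0 := by
  simp [polarRadical, LinearMap.BilinForm.mem_orthogonal_iff]

theorem polarRadical_le (W : Submodule F V) : polarRadical Q W ≤ W := inf_le_left

theorem polarRadical_sup_span_lt (hQ : ∀ v, (∀ w, polar Q v w = 0) → v = 0)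
    {U : Submodule F V} (hU : polarRadical Q U ≠ ⊥) :
    ∃ s : V, polarRadical Q (U ⊔ F ∙ s) < polarRadical Q U := by
  obtain ⟨r, hr, hr0⟩ := Submodule.exists_mem_ne_zero_of_ne_bot hU
  obtain ⟨s, hs⟩ : ∃ s, polar Q r s ≠ 0 := by
    by_contra! h
    exact hr0 (hQ r h)
  rw [mem_polarRadical] at hr
  have hle : polarRadical Q (U ⊔ F ∙ s) ≤ polarRadical Q U := by
    intro x hx
    rw [mem_polarRadical] at hx ⊢
    obtain ⟨⟨u, hu, _, hc, rfl⟩, hx⟩ := And.imp_left Submodule.mem_sup.mp hx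
    obtain ⟨c, rfl⟩ := Submodule.mem_span_singleton.mp hc
    have hc0 : c = 0 := by
      have := hx r (Submodule.mem_sup_left hr.1)
      rw [polar_add_right, polar_comm, hr.2 u hu, zero_add, polar_smul_right, smul_eq_mul] at this
      exact (mul_eq_zero.mp this).resolve_right hs
    subst hc0
    simp only [zero_smul, add_zero] at hx ⊢
    exact ⟨hu, fun y hy => hx y (Submodule.mem_sup_left hy)⟩
  refine ⟨s, lt_of_le_of_ne hle fun h => hs ?_⟩
  have hr' : r ∈ polarRadical Q (U ⊔ F ∙ s) := h ▸ mem_polarRadical.mpr hr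
  rw [polar_comm]
  exact (mem_polarRadical.mp hr').2 s
    (Submodule.mem_sup_right (Submodule.mem_span_singleton_self s))

theorem exists_le_polarRadical_eq_bot (hQ : ∀ v, (∀ w, polar Q v w = 0) → v = 0)
    (U : Submodule F V) [FiniteDimensional F U] :
    ∃ W, U ≤ W ∧ FiniteDimensional F W ∧ polarRadical Q W = ⊥ := by
  induction hn : Module.finrank F (polarRadical Q U) using Nat.strong_induction_on generalizing U
    with
  | _ n ih =>
    by_cases hU : polarRadical Q U = ⊥
    · exact ⟨U, le_rfl, inferInstance, hU⟩
    obtain ⟨s, hs⟩ := polarRadical_sup_span_lt hQ hU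
    have : FiniteDimensional F (polarRadical Q U) :=
      Submodule.finiteDimensional_of_le (polarRadical_le U)
    obtain ⟨W, hW, hWfd, hWrad⟩ := ih _ (hn ▸ Submodule.finrank_lt_finrank_of_lt hs) _ rfl
    exact ⟨W, le_sup_left.trans hW, hWfd, hWrad⟩

theorem exists_anisotropic_mem {W : Submodule F V} (hW : polarRadical Q W = ⊥) (hW0 : W ≠ ⊥) :
    ∃ v ∈ W, Q v ≠ 0 := by
  by_contra! h
  refine hW0 (eq_bot_iff.mpr fun x hx => hW ▸ mem_polarRadical.mpr ⟨hx, fun y hy => ?_⟩)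
  rw [polar, h _ (W.add_mem hy hx), h y hy, h x hx, sub_zero, sub_zero]

theorem polar_self_ne_zero (hchar : (2 : F) ≠ 0) {v : V} (hv : Q v ≠ 0) : polar Q v v ≠ 0 := by
  rw [polar_self, two_nsmul, ← two_mul]
  exact mul_ne_zero hchar hv

theorem polarRadical_inf_ker_eq_bot (hchar : (2 : F) ≠ 0) {W : Submodule F V}
    (hW : polarRadical Q W = ⊥) {v : V} (hvW : v ∈ W) (hv : Q v ≠ 0) :
    polarRadical Q (W ⊓ LinearMap.ker (polarBilin Q v)) = ⊥ := by
  refine eq_bot_iff.mpr fun x hx => hW ▸ ?_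
  simp only [mem_polarRadical, Submodule.mem_inf, LinearMap.mem_ker,
    polarBilin_apply_apply] at hx ⊢
  obtain ⟨⟨hxW, hvx⟩, hx⟩ := hx
  refine ⟨hxW, fun y hy => ?_⟩
  set c := polar Q v y / polar Q v v
  have hvv := polar_self_ne_zero hchar hv
  have hy' := hx (y - c • v) ⟨W.sub_mem hy (W.smul_mem c hvW), by
    rw [polar_sub_right, polar_smul_right, smul_eq_mul, div_mul_cancel₀ _ hvv, sub_self]⟩
  rwa [polar_sub_left, polar_smul_left, hvx, smul_zero, sub_zero] at hy'

end PolarRadical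

section CartanDieudonne

variable {F V : Type*} [Field F] [AddCommGroup V] [Module F V] {Q : QuadraticForm F V}

theorem polar_map_map {f : V →ₗ[F] V} (hf : ∀ x, Q (f x) = Q x) (x y : V) :
    polar Q (f x) (f y) = polar Q x y := by
  simp only [polar, ← map_add, hf]

theorem sub_mem_inf_ker_of_apply_eq_self {W : Submodule F V} {ψ : V →ₗ[F] V}
    (hψQ : ∀ x, Q (ψ x) = Q x) {v : V} (hψv : ψ v = v) (hψW : ∀ x, ψ x - x ∈ W) (x : V) :
    ψ x - x ∈ W ⊓ LinearMap.ker (polarBilin Q v) := by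
  refine ⟨hψW x, ?_⟩
  rw [SetLike.mem_coe, LinearMap.mem_ker, polarBilin_apply_apply, polar_sub_right,
    ← polar_map_map hψQ v x, hψv, sub_self]

/-- The reflection in `φ v - v` or, when that vector is isotropic, the reflections in `φ v + v`
and then in `v`. -/
theorem exists_reflectProd_apply_eq (hchar : (2 : F) ≠ 0) {W : Submodule F V} {v : V}
    (hvW : v ∈ W) (hv : Q v ≠ 0) {φ : V →ₗ[F] V} (hφQ : ∀ x, Q (φ x) = Q x)
    (hφW : φ v - v ∈ W) :
    ∃ l : List V, (∀ w ∈ l, w ∈ W ∧ Q w ≠ 0) ∧ reflectProd Q l (φ v) = v := by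
  by_cases hsub : Q (φ v - v) = 0
  · have hadd : Q (φ v + v) = 4 * Q v := by
      have h₁ := QuadraticMap.map_add Q (φ v) v
      have h₂ := QuadraticMap.map_add Q (φ v) (-v)
      rw [← sub_eq_add_neg, hsub, QuadraticMap.map_neg, polar_neg_right] at h₂
      linear_combination h₁ + h₂ + 2 * hφQ v
    have hadd0 : Q (φ v + v) ≠ 0 := by
      rw [hadd]
      exact mul_ne_zero (by rw [show (4 : F) = 2 * 2 by norm_num]; exact mul_ne_zero hchar hchar) hv
    have haddW : φ v + v ∈ W := by
      simpa [two_smul, add_assoc] using W.add_mem hφW (W.smul_mem 2 hvW)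
    refine ⟨[v, φ v + v], by simp [hvW, hv, haddW, hadd0], ?_⟩
    simp [reflect_add_apply (hφQ v) hadd0, reflect_self hv]
  · refine ⟨[φ v - v], by simpa using ⟨hφW, hsub⟩, ?_⟩
    simpa using reflect_sub_apply (hφQ v) hsub

/-- Cartan–Dieudonné, relative to a finite-dimensional nondegenerate subspace `W`. -/
theorem exists_reflectProd_eq (hchar : (2 : F) ≠ 0) {W : Submodule F V} [FiniteDimensional F W]
    (hW : polarRadical Q W = ⊥) {φ : V →ₗ[F] V} (hφQ : ∀ x, Q (φ x) = Q x)
    (hφW : ∀ x, φ x - x ∈ W) :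
    ∃ l : List V, (∀ w ∈ l, w ∈ W ∧ Q w ≠ 0) ∧ φ = reflectProd Q l := by
  induction hn : Module.finrank F W using Nat.strong_induction_on generalizing W φ with
  | _ n ih =>
    by_cases hW0 : W = ⊥
    · refine ⟨[], by simp, LinearMap.ext fun x => ?_⟩
      simpa [hW0, sub_eq_zero] using hφW x
    obtain ⟨v, hvW, hv⟩ := exists_anisotropic_mem hW hW0
    obtain ⟨l₀, hl₀, hl₀v⟩ := exists_reflectProd_apply_eq hchar hvW hv hφQ (hφW v)
    set ψ := reflectProd Q l₀ * φ
    have hψQ : ∀ x, Q (ψ x) = Q x := fun x => by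
      rw [Module.End.mul_apply, map_reflectProd (fun w hw => (hl₀ w hw).2), hφQ]
    have hψW : ∀ x, ψ x - x ∈ W := fun x => by
      simpa [ψ] using W.add_mem (reflectProd_sub_self_mem (fun w hw => (hl₀ w hw).1) (φ x)) (hφW x)
    set W' := W ⊓ LinearMap.ker (polarBilin Q v)
    have hvW' : v ∉ W' := fun h => polar_self_ne_zero hchar hv h.2
    have hlt : Module.finrank F W' < n :=
      hn ▸ Submodule.finrank_lt_finrank_of_lt (lt_of_le_of_ne inf_le_left fun h => hvW' (h ▸ hvW))
    obtain ⟨l₁, hl₁, hψ⟩ := ih _ hlt (polarRadical_inf_ker_eq_bot hchar hW hvW hv) hψQ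
      (sub_mem_inf_ker_of_apply_eq_self hψQ hl₀v hψW) rfl
    refine ⟨l₀.reverse ++ l₁, ?_, ?_⟩
    · intro w hw
      rcases List.mem_append.mp hw with hw | hw
      · exact hl₀ w (List.mem_reverse.mp hw)
      · exact ⟨(hl₁ w hw).1.1, (hl₁ w hw).2⟩
    · rw [reflectProd_append, ← hψ, ← mul_assoc,
        reflectProd_reverse_mul_self (fun w hw => (hl₀ w hw).2), one_mul]

end CartanDieudonne

section Eigenspace

variable {F V : Type*} [Field F] [AddCommGroup V] [Module F V]

theorem det_quotMap_id : LinearMap.det (quotMap (LinearMap.id : V →ₗ[F] V) 1) = 1 := by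
  rw [quotMap, Submodule.mapQ_id, LinearMap.det_id]

theorem finiteDimensional_range_sub_smul_id {φ : V →ₗ[F] V} (α : F)
    (hfin : FiniteDimensional F (V ⧸ eigSp φ α)) :
    FiniteDimensional F (LinearMap.range (φ - α • LinearMap.id)) :=
  Module.Finite.equiv (M := V ⧸ eigSp φ α) (φ - α • LinearMap.id).quotKerEquivRange

end Eigenspace

theorem bogolyubov_automorphism_inner_of_finitary_general
    {F V : Type*} [Field F] [AddCommGroup V] [Module F V]
    (hchar : (2 : F) ≠ 0)
    (Q : QuadraticForm F V)
    (hQ : ∀ v : V, (∀ w : V, QuadraticMap.polar Q v w = 0) → v = 0)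
    (φ : V →ₗ[F] V)
    (hφQ : ∀ v : V, Q (φ v) = Q v)
    (θ : CliffordAlgebra Q ≃ₐ[F] CliffordAlgebra Q)
    (hθ : ∀ v : V, θ (CliffordAlgebra.ι Q v) = CliffordAlgebra.ι Q (φ v))
    (hfin : FiniteDimensional F (V ⧸ eigSp φ 1))
    (hdet : φ = LinearMap.id ∨ LinearMap.det (quotMap φ 1) = 1) :
    ∃ x : (CliffordAlgebra Q)ˣ, ∀ a : CliffordAlgebra Q, θ a = x * a * ↑x⁻¹ := by
  have hdet1 : LinearMap.det (quotMap φ 1) = 1 := hdet.elim (· ▸ det_quotMap_id) id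
  have := finiteDimensional_range_sub_smul_id 1 hfin
  obtain ⟨W, hUW, hWfd, hW⟩ :=
    exists_le_polarRadical_eq_bot hQ (LinearMap.range (φ - (1 : F) • LinearMap.id))
  have hφW : ∀ x, φ x - x ∈ W := fun x => hUW ⟨x, by simp⟩
  obtain ⟨l, hl, rfl⟩ := exists_reflectProd_eq hchar hW hφQ hφW
  have hWinv := Submodule.le_comap_of_forall_sub_mem hφW
  have heven : Even l.length := by
    rw [← neg_one_pow_eq_one_iff_even (R := F) fun h => hchar (by linear_combination -h),
      ← det_restrict_reflectProd hl hWinv, det_restrict_eq_det_quotMap hφW hWinv, hdet1]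
  obtain ⟨x, hx⟩ := exists_units_conj_ι_eq_reflectProd fun w hw => (hl w hw).2
  refine ⟨x, eq_conj_of_apply_ι x fun v => ?_⟩
  rw [hx, heven.neg_one_pow, one_smul, hθ]

/-- Sufficiency, case (1): if `φ` is finitary and either `φ = Id` or
`det (φ|_{V/V(1)}) = 1`, then the Bogolyubov automorphism `[φ]` of `Cl(V, Q)`
is inner. -/
theorem bogolyubov_automorphism_inner_of_finitary
    {F V : Type*} [Field F] [IsAlgClosed F] [AddCommGroup V] [Module F V]
    (hchar : (2 : F) ≠ 0) (hV : ¬ FiniteDimensional F V)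
    (Q : QuadraticForm F V)
    (hQ : ∀ v : V, (∀ w : V, QuadraticMap.polar Q v w = 0) → v = 0)
    (φ : V →ₗ[F] V) (hφbij : Function.Bijective φ)
    (hφQ : ∀ v : V, Q (φ v) = Q v)
    (θ : CliffordAlgebra Q ≃ₐ[F] CliffordAlgebra Q)
    (hθ : ∀ v : V, θ (CliffordAlgebra.ι Q v) = CliffordAlgebra.ι Q (φ v))
    (hfin : FiniteDimensional F (V ⧸ eigSp φ 1))
    (hdet : φ = LinearMap.id ∨ LinearMap.det (quotMap φ 1) = 1) :
    ∃ x : (CliffordAlgebra Q)ˣ, ∀ a : CliffordAlgebra Q, θ a = x * a * ↑x⁻¹ :=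
  bogolyubov_automorphism_inner_of_finitary_general hchar Q hQ φ hφQ θ hθ hfin hdet
end

section
/- Let F be a field of characteristic ≠ 2, V an infinite-dimensional vector space over F with a nondegenerate quadratic form Q, and φ : V → V an orthogonal linear transformation. If the eigenspace V(1) = ker(φ − Id) has finite codimension in V, then there exists an even-dimensional, finite-dimensional, nondegenerate, φ-invariant subspace W ⊆ V such that W^⊥ = {v ∈ V : (v|W) = 0} is contained in V(1). -/
section Aux

open QuadraticMap Submodule Module

variable {F V : Type*} [Field F] [AddCommGroup V] [Module F V]

/-- The orthogonal complement of a submodule with respect to the polar form of `Q`. -/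
def qperp (Q : QuadraticForm F V) (U : Submodule F V) : Submodule F V where
  carrier := {v | ∀ u ∈ U, polar Q v u = 0}
  add_mem' := by
    intro a b ha hb u hu
    rw [polar_add_left, ha u hu, hb u hu, add_zero]
  zero_mem' := by
    intro u hu
    exact polar_zero_left Q u
  smul_mem' := by
    intro c a ha u hu
    rw [polar_smul_left, ha u hu, smul_zero]

lemma mem_qperp {Q : QuadraticForm F V} {U : Submodule F V} {v : V} :
    v ∈ qperp Q U ↔ ∀ u ∈ U, polar Q v u = 0 := Iff.rfl

/-- Every finite-dimensional subspace of a nondegenerate quadratic space is contained in a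
finite-dimensional subspace on which the form is nondegenerate. -/
lemma qext (Q : QuadraticForm F V)
    (hQ : ∀ v : V, (∀ w : V, polar Q v w = 0) → v = 0) :
    ∀ (n : ℕ) (U : Submodule F V), FiniteDimensional F U →
      Module.finrank F (U ⊓ qperp Q U : Submodule F V) = n →
      ∃ W : Submodule F V, U ≤ W ∧ FiniteDimensional F W ∧
        (∀ u ∈ W, (∀ w ∈ W, polar Q u w = 0) → u = 0) := by
  intro n
  induction n using Nat.strong_induction_on with
  | _ n ih =>
    intro U hUfin hrank
    haveI := hUfin
    by_cases hrad : (U ⊓ qperp Q U : Submodule F V) = ⊥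
    · refine ⟨U, le_rfl, hUfin, ?_⟩
      intro u hu h
      have hmem : u ∈ U ⊓ qperp Q U := Submodule.mem_inf.mpr ⟨hu, fun w hw => h w hw⟩
      rw [hrad] at hmem
      simpa using hmem
    · obtain ⟨x, hx, hx0⟩ := Submodule.exists_mem_ne_zero_of_ne_bot hrad
      obtain ⟨hxU, hxperp⟩ := Submodule.mem_inf.mp hx
      obtain ⟨y, hy⟩ : ∃ y, polar Q x y ≠ 0 := by
        by_contra h
        push_neg at h
        exact hx0 (hQ x h)
      set U' := U ⊔ Submodule.span F {y} with hU'def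
      have hUle : U ≤ U' := le_sup_left
      have hyU' : y ∈ U' := Submodule.mem_sup_right (Submodule.mem_span_singleton_self y)
      haveI hfin' : FiniteDimensional F U' := inferInstance
      have hle : (U' ⊓ qperp Q U' : Submodule F V) ≤ U ⊓ qperp Q U := by
        intro v hv
        obtain ⟨hv1, hv2⟩ := Submodule.mem_inf.mp hv
        obtain ⟨u, hu, w, hw, rfl⟩ := Submodule.mem_sup.mp hv1
        obtain ⟨c, rfl⟩ := Submodule.mem_span_singleton.mp hw
        have hvx : polar Q (u + c • y) x = 0 := hv2 x (hUle hxU)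
        have hux : polar Q u x = 0 := by rw [polar_comm]; exact hxperp u hu
        rw [polar_add_left, polar_smul_left, hux, zero_add, smul_eq_mul] at hvx
        have hyx : polar Q y x ≠ 0 := by rw [polar_comm]; exact hy
        have hc : c = 0 := by
          rcases mul_eq_zero.mp hvx with h | h
          · exact h
          · exact absurd h hyx
        subst hc
        rw [zero_smul, add_zero]
        refine Submodule.mem_inf.mpr ⟨hu, fun w' hw' => ?_⟩
        have := hv2 w' (hUle hw')
        rwa [zero_smul, add_zero] at this
      have hne : (U' ⊓ qperp Q U' : Submodule F V) ≠ U ⊓ qperp Q U := by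
        intro heq
        have hx' : x ∈ (U' ⊓ qperp Q U' : Submodule F V) := heq ▸ hx
        exact hy ((Submodule.mem_inf.mp hx').2 y hyU')
      have hlt : (U' ⊓ qperp Q U' : Submodule F V) < U ⊓ qperp Q U := lt_of_le_of_ne hle hne
      haveI : FiniteDimensional F (U ⊓ qperp Q U : Submodule F V) :=
        Submodule.finiteDimensional_of_le inf_le_left
      have hlt' : Module.finrank F (U' ⊓ qperp Q U' : Submodule F V) < n :=
        hrank ▸ Submodule.finrank_lt_finrank_of_lt hlt
      obtain ⟨W, hW1, hW2, hW3⟩ := ih _ hlt' U' hfin' rfl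
      exact ⟨W, le_trans hUle hW1, hW2, hW3⟩

/-- In an infinite-dimensional nondegenerate quadratic space, the orthogonal complement of
any finite-dimensional subspace contains an anisotropic vector. -/
lemma qaniso (Q : QuadraticForm F V)
    (hQ : ∀ v : V, (∀ w : V, polar Q v w = 0) → v = 0)
    (hV : ¬ FiniteDimensional F V)
    (W₀ : Submodule F V) (hW : FiniteDimensional F W₀) :
    ∃ z ∈ qperp Q W₀, Q z ≠ 0 := by
  by_contra hcon
  push_neg at hcon
  haveI := hW
  set S := qperp Q W₀ with hSdef
  have hiso : ∀ u ∈ S, ∀ v ∈ S, polar Q u v = 0 := by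
    intro u hu v hv
    have h1 := hcon (u + v) (S.add_mem hu hv)
    have h2 := hcon u hu
    have h3 := hcon v hv
    simp [QuadraticMap.polar, h1, h2, h3]
  obtain ⟨W₁, hcompl⟩ := Submodule.exists_isCompl S
  set L₀ : V →ₗ[F] Module.Dual F W₀ := (W₀.subtype.dualMap).comp Q.polarBilin with hL₀
  have hSker : S = LinearMap.ker L₀ := by
    ext v
    rw [LinearMap.mem_ker, LinearMap.ext_iff]
    constructor
    · intro hv w
      simp only [hL₀, LinearMap.comp_apply, LinearMap.dualMap_apply, LinearMap.zero_apply,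
        Submodule.coe_subtype, polarBilin_apply_apply]
      exact hv w w.2
    · intro hv u hu
      have := hv ⟨u, hu⟩
      simpa only [hL₀, LinearMap.comp_apply, LinearMap.dualMap_apply, LinearMap.zero_apply,
        Submodule.coe_subtype, polarBilin_apply_apply] using this
  have hLinj : Function.Injective (S.liftQ L₀ hSker.le) := by
    rw [← LinearMap.ker_eq_bot]
    exact Submodule.ker_liftQ_eq_bot _ _ _ hSker.ge
  haveI hquot : FiniteDimensional F (V ⧸ S) :=
    FiniteDimensional.of_injective (S.liftQ L₀ hSker.le) hLinj
  haveI hW₁fin : FiniteDimensional F W₁ :=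
    LinearEquiv.finiteDimensional (Submodule.quotientEquivOfIsCompl S W₁ hcompl)
  set M : S →ₗ[F] Module.Dual F W₁ :=
    (W₁.subtype.dualMap).comp (Q.polarBilin.domRestrict S) with hM
  have hMinj : Function.Injective M := by
    rw [← LinearMap.ker_eq_bot, eq_bot_iff]
    intro s hs
    rw [LinearMap.mem_ker, LinearMap.ext_iff] at hs
    have hsW₁ : ∀ w ∈ W₁, polar Q (s : V) w = 0 := by
      intro w hw
      have := hs ⟨w, hw⟩
      simpa only [hM, LinearMap.comp_apply, LinearMap.dualMap_apply, LinearMap.zero_apply,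
        Submodule.coe_subtype, LinearMap.domRestrict_apply, polarBilin_apply_apply] using this
    have hall : ∀ w : V, polar Q (s : V) w = 0 := by
      intro w
      have hw : w ∈ S ⊔ W₁ := by
        rw [hcompl.codisjoint.eq_top]; exact Submodule.mem_top
      obtain ⟨a, ha, b, hb, rfl⟩ := Submodule.mem_sup.mp hw
      rw [polar_add_right, hiso s s.2 a ha, hsW₁ b hb, add_zero]
    have : (s : V) = 0 := hQ _ hall
    simpa [Submodule.mem_bot] using this
  haveI hSfin : FiniteDimensional F S := FiniteDimensional.of_injective M hMinj
  have : FiniteDimensional F V :=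
    LinearEquiv.finiteDimensional (Submodule.prodEquivOfIsCompl S W₁ hcompl)
  exact hV this

end Aux

/-- If the eigenspace `V(1) = ker (φ - Id)` of an orthogonal transformation `φ`
has finite codimension in `V`, then there exists an even-dimensional,
finite-dimensional, nondegenerate, `φ`-invariant subspace `W ⊆ V` whose orthogonal
complement `W^⊥` is contained in `V(1)`. -/
theorem exists_even_nondeg_invariant_subspace_perp_le_fixed
    {F V : Type*} [Field F] [AddCommGroup V] [Module F V]
    (hchar : (2 : F) ≠ 0) (hV : ¬ FiniteDimensional F V)
    (Q : QuadraticForm F V)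
    (hQ : ∀ v : V, (∀ w : V, QuadraticMap.polar Q v w = 0) → v = 0)
    (φ : V →ₗ[F] V) (hφbij : Function.Bijective φ)
    (hφQ : ∀ v : V, Q (φ v) = Q v)
    (hfin : FiniteDimensional F (V ⧸ eigSp φ 1)) :
    ∃ W : Submodule F V,
      FiniteDimensional F W ∧ Even (Module.finrank F W) ∧
      (∀ u ∈ W, (∀ w ∈ W, QuadraticMap.polar Q u w = 0) → u = 0) ∧
      (∀ w ∈ W, φ w ∈ W) ∧
      (∀ v : V, (∀ w ∈ W, QuadraticMap.polar Q v w = 0) → v ∈ eigSp φ 1) := by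
  classical
  open QuadraticMap Submodule in
  set T : V →ₗ[F] V := φ - LinearMap.id with hT
  have heig : eigSp φ 1 = LinearMap.ker T := by
    unfold eigSp
    rw [one_smul]
  have hTapp : ∀ v : V, T v = φ v - v := by
    intro v
    simp [hT, LinearMap.sub_apply]
  have hfinq : FiniteDimensional F (V ⧸ LinearMap.ker T) := by rw [← heig]; exact hfin
  haveI := hfinq
  haveI hUfin : FiniteDimensional F (LinearMap.range T) :=
    LinearEquiv.finiteDimensional (LinearMap.quotKerEquivRange T)
  set U := LinearMap.range T with hU
  -- polar form is invariant under φ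
  have hpolar : ∀ a b : V, QuadraticMap.polar Q (φ a) (φ b) = QuadraticMap.polar Q a b := by
    intro a b
    simp [QuadraticMap.polar, ← map_add, hφQ]
  -- Any subspace containing U is φ-invariant
  have hinv : ∀ (W : Submodule F V), U ≤ W → ∀ w ∈ W, φ w ∈ W := by
    intro W hUW w hw
    have hφw : φ w = w + T w := by rw [hTapp]; abel
    rw [hφw]
    exact W.add_mem hw (hUW (LinearMap.mem_range_self T w))
  -- Perp of any subspace containing U lies in V(1)
  have hmain : ∀ (W : Submodule F V), U ≤ W →
      ∀ v : V, (∀ w ∈ W, QuadraticMap.polar Q v w = 0) → v ∈ eigSp φ 1 := by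
    intro W hUW v hv
    rw [heig, LinearMap.mem_ker]
    apply hQ
    intro u
    obtain ⟨u', rfl⟩ := hφbij.2 u
    have h1 : QuadraticMap.polar Q (φ v) (φ u') = QuadraticMap.polar Q v u' := hpolar v u'
    have h2 : QuadraticMap.polar Q v (φ u') = QuadraticMap.polar Q v u' := by
      have hφu : φ u' = u' + T u' := by rw [hTapp]; abel
      rw [hφu, polar_add_right, hv (T u') (hUW (LinearMap.mem_range_self T u')), add_zero]
    rw [hTapp, polar_sub_left, h1, h2, sub_self]
  -- Extend U to a nondegenerate finite-dimensional subspace W₀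
  obtain ⟨W₀, hUW₀, hW₀fin, hW₀nd⟩ := qext Q hQ _ U hUfin rfl
  haveI := hW₀fin
  by_cases hev : Even (Module.finrank F W₀)
  · exact ⟨W₀, hW₀fin, hev, hW₀nd, hinv W₀ hUW₀, hmain W₀ hUW₀⟩
  · -- odd case: enlarge by an anisotropic vector in the perp
    obtain ⟨z, hzS, hQz⟩ := qaniso Q hQ hV W₀ hW₀fin
    have hz0 : z ≠ 0 := fun h => hQz (by rw [h]; exact map_zero Q)
    have hzW₀ : z ∉ W₀ := by
      intro hzW
      exact hz0 (hW₀nd z hzW (fun w hw => hzS w hw))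
    set W := W₀ ⊔ Submodule.span F {z} with hWdef
    have hUW : U ≤ W := le_trans hUW₀ le_sup_left
    haveI hWfin : FiniteDimensional F W := inferInstance
    have hdisj : W₀ ⊓ Submodule.span F {z} = ⊥ := by
      rw [← disjoint_iff]
      exact Submodule.disjoint_span_singleton.mpr (fun h => absurd h hzW₀)
    have hzz : QuadraticMap.polar Q z z ≠ 0 := by
      rw [QuadraticMap.polar_self, two_smul, ← two_mul]
      exact mul_ne_zero hchar hQz
    have hzW : z ∈ W := Submodule.mem_sup_right (Submodule.mem_span_singleton_self z)
    have hrank : Module.finrank F W = Module.finrank F W₀ + 1 := by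
      have := Submodule.finrank_sup_add_finrank_inf_eq W₀ (Submodule.span F {z})
      rw [hdisj, finrank_span_singleton hz0] at this
      simpa using this
    have heven : Even (Module.finrank F W) := by
      rw [hrank]
      exact Nat.even_add_one.mpr hev
    have hWnd : ∀ u ∈ W, (∀ w ∈ W, QuadraticMap.polar Q u w = 0) → u = 0 := by
      intro u hu h
      obtain ⟨w, hw, s, hs, rfl⟩ := Submodule.mem_sup.mp hu
      obtain ⟨c, rfl⟩ := Submodule.mem_span_singleton.mp hs
      have hz' : QuadraticMap.polar Q (w + c • z) z = 0 := h z hzW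
      have hwz : QuadraticMap.polar Q w z = 0 := by
        rw [QuadraticMap.polar_comm]; exact hzS w hw
      rw [polar_add_left, polar_smul_left, hwz, zero_add, smul_eq_mul] at hz'
      have hc : c = 0 := by
        rcases mul_eq_zero.mp hz' with h' | h'
        · exact h'
        · exact absurd h' hzz
      subst hc
      rw [zero_smul, add_zero]
      refine hW₀nd w hw (fun w' hw' => ?_)
      have := h w' (Submodule.mem_sup_left hw')
      rwa [zero_smul, add_zero] at this
    exact ⟨W, hWfin, heven, hWnd, hinv W hUW, hmain W hUW⟩
end

section
/- Let F be a field of characteristic ≠ 2, V an infinite-dimensional vector space over F with a nondegenerate quadratic form Q, and φ : V → V an orthogonal linear transformation. If the eigenspace V(−1) = ker(φ + Id) has finite codimension in V, then there exists an even-dimensional, finite-dimensional, nondegenerate, φ-invariant subspace W ⊆ V such that W^⊥ = {v ∈ V : (v|W) = 0} is contained in V(−1). -/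
open Module

/-- The orthogonal complement of a subspace with respect to the polar form of `Q`. -/
def pperp {F V : Type*} [Field F] [AddCommGroup V] [Module F V]
    (Q : QuadraticForm F V) (X : Submodule F V) : Submodule F V where
  carrier := {v | ∀ x ∈ X, QuadraticMap.polar Q v x = 0}
  add_mem' := by
    intro a b ha hb x hx
    rw [QuadraticMap.polar_add_left, ha x hx, hb x hx, add_zero]
  zero_mem' := by
    intro x hx
    simpa using QuadraticMap.polar_smul_left (Q := Q) (0 : F) 0 x
  smul_mem' := by
    intro c a ha x hx
    rw [QuadraticMap.polar_smul_left, ha x hx, smul_zero]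

theorem mem_pperp {F V : Type*} [Field F] [AddCommGroup V] [Module F V]
    (Q : QuadraticForm F V) (X : Submodule F V) (v : V) :
    v ∈ pperp Q X ↔ ∀ x ∈ X, QuadraticMap.polar Q v x = 0 := Iff.rfl

theorem pperp_antimono {F V : Type*} [Field F] [AddCommGroup V] [Module F V]
    (Q : QuadraticForm F V) {X Y : Submodule F V} (h : X ≤ Y) :
    pperp Q Y ≤ pperp Q X := fun v hv x hx => hv x (h hx)

/-- Enlarge a finite-dimensional subspace to one with trivial radical. -/
theorem kill_rad {F V : Type*} [Field F] [AddCommGroup V] [Module F V]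
    (Q : QuadraticForm F V)
    (hQ : ∀ v : V, (∀ w : V, QuadraticMap.polar Q v w = 0) → v = 0) :
    ∀ (n : ℕ) (X : Submodule F V), FiniteDimensional F X →
      Module.finrank F (X ⊓ pperp Q X : Submodule F V) ≤ n →
      ∃ Y : Submodule F V, X ≤ Y ∧ FiniteDimensional F Y ∧ Y ⊓ pperp Q Y = ⊥ := by
  intro n
  induction n with
  | zero =>
      intro X hXfin hrk
      refine ⟨X, le_rfl, hXfin, ?_⟩
      haveI : FiniteDimensional F (X ⊓ pperp Q X : Submodule F V) :=
        Submodule.finiteDimensional_of_le inf_le_left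
      exact Submodule.finrank_eq_zero.mp (Nat.le_zero.mp hrk)
  | succ n ih =>
      intro X hXfin hrk
      by_cases hbot : X ⊓ pperp Q X = ⊥
      · exact ⟨X, le_rfl, hXfin, hbot⟩
      · obtain ⟨r, hrmem, hrne⟩ := Submodule.exists_mem_ne_zero_of_ne_bot hbot
        obtain ⟨s, hs⟩ : ∃ s : V, QuadraticMap.polar Q r s ≠ 0 := by
          by_contra h
          push_neg at h
          exact hrne (hQ r h)
        set X' : Submodule F V := X ⊔ (F ∙ s) with hX'
        haveI : FiniteDimensional F X' := Submodule.finiteDimensional_sup X (F ∙ s)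
        have hXle : X ≤ X' := le_sup_left
        have hrad_le : X' ⊓ pperp Q X' ≤ X ⊓ pperp Q X := by
          rintro x ⟨hx1, hx2⟩
          obtain ⟨u, hu, y, hy, rfl⟩ := Submodule.mem_sup.mp hx1
          obtain ⟨α, rfl⟩ := Submodule.mem_span_singleton.mp hy
          have hr' : r ∈ X' := hXle hrmem.1
          have h0 : QuadraticMap.polar Q (u + α • s) r = 0 := hx2 r hr'
          rw [QuadraticMap.polar_add_left, QuadraticMap.polar_smul_left] at h0
          have hur : QuadraticMap.polar Q u r = 0 := by
            rw [QuadraticMap.polar_comm]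
            exact hrmem.2 u hu
          rw [hur, zero_add, smul_eq_mul] at h0
          have hsr : QuadraticMap.polar Q s r ≠ 0 := by
            rw [QuadraticMap.polar_comm]; exact hs
          have hα : α = 0 := by
            rcases mul_eq_zero.mp h0 with h | h
            · exact h
            · exact absurd h hsr
          subst hα
          rw [zero_smul, add_zero] at hx2 ⊢
          exact ⟨hu, pperp_antimono Q hXle hx2⟩
        have hrnot : r ∉ X' ⊓ pperp Q X' := by
          rintro ⟨-, h2⟩
          exact hs (h2 s (Submodule.mem_sup_right (Submodule.mem_span_singleton_self s)))
        have hlt : X' ⊓ pperp Q X' < X ⊓ pperp Q X :=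
          lt_of_le_of_ne hrad_le (fun h => hrnot (h ▸ hrmem))
        haveI : FiniteDimensional F (X ⊓ pperp Q X : Submodule F V) :=
          Submodule.finiteDimensional_of_le inf_le_left
        have hrk' : Module.finrank F (X' ⊓ pperp Q X' : Submodule F V) ≤ n := by
          have := Submodule.finrank_lt_finrank_of_lt hlt
          omega
        obtain ⟨Y, hY1, hY2, hY3⟩ := ih X' inferInstance hrk'
        exact ⟨Y, hXle.trans hY1, hY2, hY3⟩

/-- If `Q` restricted to a finite-dimensional `W` is nondegenerate, every vector
decomposes as a vector in `W` plus a vector orthogonal to `W`. -/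
theorem exists_decomp {F V : Type*} [Field F] [AddCommGroup V] [Module F V]
    (Q : QuadraticForm F V) (W : Submodule F V) [FiniteDimensional F W]
    (hW : W ⊓ pperp Q W = ⊥) (v : V) : ∃ w ∈ W, v - w ∈ pperp Q W := by
  set B' : W →ₗ[F] Module.Dual F W :=
    (LinearMap.BilinForm.restrict (QuadraticMap.polarBilin Q) W) with hB'
  have hinj : Function.Injective B' := by
    rw [← LinearMap.ker_eq_bot, eq_bot_iff]
    intro w hw
    rw [LinearMap.mem_ker] at hw
    have hmem : (w : V) ∈ W ⊓ pperp Q W := by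
      refine ⟨w.2, fun x hx => ?_⟩
      have := LinearMap.congr_fun hw ⟨x, hx⟩
      simpa [hB', QuadraticMap.polar_comm] using this
    rw [hW, Submodule.mem_bot] at hmem
    simp [Submodule.mem_bot, Subtype.ext_iff, hmem]
  have hsurj : Function.Surjective B' := by
    rw [← LinearMap.injective_iff_surjective_of_finrank_eq_finrank
      (Subspace.dual_finrank_eq (K := F) (V := W)).symm]
    exact hinj
  obtain ⟨w, hw⟩ := hsurj ((QuadraticMap.polarBilin Q v).domRestrict W)
  refine ⟨w, w.2, fun x hx => ?_⟩
  have := LinearMap.congr_fun hw ⟨x, hx⟩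
  simp only [hB', LinearMap.BilinForm.restrict_apply, LinearMap.domRestrict_apply,
    QuadraticMap.polarBilin_apply_apply] at this
  rw [QuadraticMap.polar_sub_left, sub_eq_zero]
  exact this.symm

/-- If the eigenspace `V(-1) = ker (φ + Id)` of an orthogonal transformation `φ`
has finite codimension in `V`, then there exists an even-dimensional,
finite-dimensional, nondegenerate, `φ`-invariant subspace `W ⊆ V` whose orthogonal
complement `W^⊥` is contained in `V(-1)`. -/
theorem exists_even_nondeg_invariant_subspace_perp_le_neg_fixed
    {F V : Type*} [Field F] [AddCommGroup V] [Module F V]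
    (hchar : (2 : F) ≠ 0) (hV : ¬ FiniteDimensional F V)
    (Q : QuadraticForm F V)
    (hQ : ∀ v : V, (∀ w : V, QuadraticMap.polar Q v w = 0) → v = 0)
    (φ : V →ₗ[F] V) (hφbij : Function.Bijective φ)
    (hφQ : ∀ v : V, Q (φ v) = Q v)
    (hfin : FiniteDimensional F (V ⧸ eigSp φ (-1))) :
    ∃ W : Submodule F V,
      FiniteDimensional F W ∧ Even (Module.finrank F W) ∧
      (∀ u ∈ W, (∀ w ∈ W, QuadraticMap.polar Q u w = 0) → u = 0) ∧
      (∀ w ∈ W, φ w ∈ W) ∧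
      (∀ v : V, (∀ w ∈ W, QuadraticMap.polar Q v w = 0) → v ∈ eigSp φ (-1)) := by
  classical
  -- the eigenspace is the kernel of φ + id
  have heig : eigSp φ (-1) = LinearMap.ker (φ + LinearMap.id) := by
    have : φ - (-1 : F) • LinearMap.id = φ + LinearMap.id := by
      ext v; simp [sub_neg_eq_add]
    rw [eigSp, this]
  have hmem_eig : ∀ v : V, v ∈ eigSp φ (-1) ↔ φ v = -v := by
    intro v
    rw [heig, LinearMap.mem_ker, LinearMap.add_apply, LinearMap.id_apply, add_eq_zero_iff_eq_neg]
  set ψ : V →ₗ[F] V := φ + LinearMap.id with hψ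
  -- U := range (φ + id) is finite-dimensional
  set U : Submodule F V := LinearMap.range ψ with hU
  haveI hUfin : FiniteDimensional F U := by
    haveI : FiniteDimensional F (V ⧸ LinearMap.ker ψ) := by
      rw [hψ, ← heig]; exact hfin
    exact Module.Finite.equiv (LinearMap.quotKerEquivRange ψ)
  -- any subspace containing U is φ-invariant
  have hinv : ∀ X : Submodule F V, U ≤ X → ∀ w ∈ X, φ w ∈ X := by
    intro X hUX w hw
    have h1 : ψ w ∈ X := hUX (LinearMap.mem_range_self _ w)
    have h2 : φ w = ψ w - w := by
      rw [hψ, LinearMap.add_apply, LinearMap.id_apply, add_sub_cancel_right]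
    rw [h2]
    exact Submodule.sub_mem X h1 hw
  -- φ preserves the polar form
  have horth : ∀ a b : V, QuadraticMap.polar Q (φ a) (φ b) = QuadraticMap.polar Q a b := by
    intro a b
    rw [QuadraticMap.polar, QuadraticMap.polar, ← map_add, hφQ, hφQ, hφQ]
  -- anything orthogonal to U lies in the eigenspace
  have hperpU : ∀ v : V, (∀ u ∈ U, QuadraticMap.polar Q v u = 0) → v ∈ eigSp φ (-1) := by
    intro v hv
    obtain ⟨v', hv'⟩ := hφbij.2 v
    have key : ∀ w : V, QuadraticMap.polar Q (v' + v) w = 0 := by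
      intro w
      have h1 : QuadraticMap.polar Q v (ψ w) = 0 :=
        hv _ (LinearMap.mem_range_self _ w)
      have h2 : QuadraticMap.polar Q v (φ w) = QuadraticMap.polar Q v' w := by
        rw [← hv', horth]
      rw [hψ, LinearMap.add_apply, LinearMap.id_apply, QuadraticMap.polar_add_right, h2] at h1
      rw [QuadraticMap.polar_add_left]
      exact h1
    have hv'0 : v' + v = 0 := hQ _ key
    have hvv : v' = -v := by linear_combination (norm := abel) hv'0
    have h3 : v = -v' := by rw [hvv, neg_neg]
    rw [hmem_eig, h3, map_neg, hv', neg_neg, hvv]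
  -- enlarge U to a nondegenerate finite-dimensional subspace W1 ⊇ U
  obtain ⟨W1, hUW1, hW1fin, hW1rad⟩ :=
    kill_rad Q hQ (Module.finrank F (U ⊓ pperp Q U : Submodule F V)) U hUfin le_rfl
  haveI := hW1fin
  -- the final packaging, for any nondegenerate finite-dimensional W ⊇ U of even rank
  have package : ∀ W : Submodule F V, U ≤ W → FiniteDimensional F W →
      Even (Module.finrank F W) → W ⊓ pperp Q W = ⊥ →
      ∃ W : Submodule F V,
      FiniteDimensional F W ∧ Even (Module.finrank F W) ∧
      (∀ u ∈ W, (∀ w ∈ W, QuadraticMap.polar Q u w = 0) → u = 0) ∧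
      (∀ w ∈ W, φ w ∈ W) ∧
      (∀ v : V, (∀ w ∈ W, QuadraticMap.polar Q v w = 0) → v ∈ eigSp φ (-1)) := by
    intro W hUW hWfin hWeven hWrad
    refine ⟨W, hWfin, hWeven, ?_, hinv W hUW, ?_⟩
    · intro u hu h
      have : u ∈ W ⊓ pperp Q W := ⟨hu, fun x hx => h x hx⟩
      rwa [hWrad, Submodule.mem_bot] at this
    · intro v h
      exact hperpU v (fun u hu => h u (hUW hu))
  by_cases hpar : Even (Module.finrank F W1)
  · exact package W1 hUW1 hW1fin hpar hW1rad
  · -- find an anisotropic vector in the orthogonal complement of W1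
    have hvex : ∃ v : V, v ∈ pperp Q W1 ∧ Q v ≠ 0 := by
      -- pperp W1 is nonzero
      have hne : ∃ x : V, x ∈ pperp Q W1 ∧ x ≠ 0 := by
        by_contra h
        push_neg at h
        have : ∀ v : V, v ∈ W1 := by
          intro v
          obtain ⟨w, hw, hvw⟩ := exists_decomp Q W1 hW1rad v
          have := h _ hvw
          have : v = w := by rwa [sub_eq_zero] at this
          rwa [this]
        exact hV (Module.Finite.equiv
          (LinearEquiv.ofTop W1 (Submodule.eq_top_iff'.mpr this)))
      obtain ⟨x, hx, hx0⟩ := hne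
      obtain ⟨z, hz⟩ : ∃ z : V, QuadraticMap.polar Q x z ≠ 0 := by
        by_contra h
        push_neg at h
        exact hx0 (hQ x h)
      obtain ⟨w, hw, hy⟩ := exists_decomp Q W1 hW1rad z
      set y := z - w with hydef
      have hxy : QuadraticMap.polar Q x y ≠ 0 := by
        rw [hydef, QuadraticMap.polar_sub_right, hx w hw, sub_zero]
        exact hz
      by_contra hcon
      push_neg at hcon
      have h1 : Q x = 0 := hcon x hx
      have h2 : Q y = 0 := hcon y hy
      have h3 : Q (x + y) = 0 := hcon (x + y) (Submodule.add_mem _ hx hy)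
      rw [QuadraticMap.polar, h1, h2, h3] at hxy
      simp at hxy
    obtain ⟨v, hvperp, hvQ⟩ := hvex
    have hvne : v ≠ 0 := fun h => hvQ (by rw [h, map_zero])
    have hvnotW1 : v ∉ W1 := by
      intro h
      have : v ∈ W1 ⊓ pperp Q W1 := ⟨h, hvperp⟩
      rw [hW1rad, Submodule.mem_bot] at this
      exact hvne this
    set W : Submodule F V := W1 ⊔ (F ∙ v) with hW
    haveI hWfin : FiniteDimensional F W := Submodule.finiteDimensional_sup W1 (F ∙ v)
    have hdisj : W1 ⊓ (F ∙ v) = ⊥ := by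
      rw [eq_bot_iff]
      rintro x ⟨hx1, hx2⟩
      obtain ⟨α, rfl⟩ := Submodule.mem_span_singleton.mp hx2
      rcases eq_or_ne α 0 with h | h
      · simp [h]
      · exact absurd (by simpa [h] using Submodule.smul_mem W1 α⁻¹ hx1) hvnotW1
    have hrank : Module.finrank F W = Module.finrank F W1 + 1 := by
      have := Submodule.finrank_sup_add_finrank_inf_eq W1 (F ∙ v)
      rw [hdisj, finrank_bot, finrank_span_singleton hvne, ← hW] at this
      omega
    have hWeven : Even (Module.finrank F W) := by
      rw [hrank]
      exact Nat.even_add_one.mpr hpar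
    -- the polar form of v against itself is 2 Q v ≠ 0
    have hpolarself : QuadraticMap.polar Q v v ≠ 0 := by
      rw [QuadraticMap.polar_self]
      intro h
      apply hvQ
      have h2 : (2 : F) * Q v = 0 := by
        rw [two_mul]
        simpa [two_smul] using h
      rcases mul_eq_zero.mp h2 with h | h
      · exact absurd h hchar
      · exact h
    -- W is nondegenerate
    have hWrad : W ⊓ pperp Q W = ⊥ := by
      rw [eq_bot_iff]
      rintro x ⟨hx1, hx2⟩
      obtain ⟨u, hu, y, hy, rfl⟩ := Submodule.mem_sup.mp hx1
      obtain ⟨α, rfl⟩ := Submodule.mem_span_singleton.mp hy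
      have hvW : v ∈ W := Submodule.mem_sup_right (Submodule.mem_span_singleton_self v)
      have h0 : QuadraticMap.polar Q (u + α • v) v = 0 := hx2 v hvW
      rw [QuadraticMap.polar_add_left, QuadraticMap.polar_smul_left] at h0
      have huv : QuadraticMap.polar Q u v = 0 := by
        rw [QuadraticMap.polar_comm]
        exact hvperp u hu
      rw [huv, zero_add, smul_eq_mul] at h0
      have hα : α = 0 := by
        rcases mul_eq_zero.mp h0 with h | h
        · exact h
        · exact absurd h hpolarself
      subst hα
      rw [zero_smul, add_zero] at hx2 ⊢
      have : u ∈ W1 ⊓ pperp Q W1 :=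
        ⟨hu, fun x hx => hx2 x (Submodule.mem_sup_left hx)⟩
      rwa [hW1rad] at this
    exact package W (hUW1.trans le_sup_left) hWfin hWeven hWrad
end

section
/- Let F be a field of characteristic ≠ 2, V a vector space over F with a nondegenerate quadratic form Q, and φ : V → V an orthogonal linear transformation with associated Bogolyubov automorphism [φ] of Cl(V,Q). If v₁, v₂ ∈ V are linearly independent and [φ](ι(v₁)ι(v₂)) = ι(v₁)ι(v₂), then the subspace F·v₁ + F·v₂ is φ-invariant. -/
/-!
Bracketing with a vector sends a bivector back to a vector:
`⁅ι w, ι a * ι b⁆ = ι (B(w, a) b - B(w, b) a)` with `B` the polar form. Since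
`ι (φ v₁) * ι (φ v₂) = θ (ι v₁ * ι v₂) = ι v₁ * ι v₂` and `ι` is injective in characteristic
not two, `B(w, φ v₁) φ v₂ - B(w, φ v₂) φ v₁` lies in `span {v₁, v₂}` for every `w`.
The vectors `φ v₁, φ v₂` are independent, since `φ` is injective along with `θ` and `ι`, so by
nondegeneracy some `w` is orthogonal to one of them but not to the other, which isolates each
of them in that span.
-/

namespace LinearMap.SeparatingRight

variable {K V W : Type*} [Field K] [AddCommGroup V] [Module K V] [AddCommGroup W] [Module K W]
  {B : V →ₗ[K] W →ₗ[K] K}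

theorem exists_apply_eq_zero_and_apply_ne_zero (hB : B.SeparatingRight) {a b : W}
    (hab : LinearIndependent K ![a, b]) : ∃ w, B w b = 0 ∧ B w a ≠ 0 := by
  by_contra! h
  have hker : ⨅ _ : Unit, ker (B.flip b) ≤ ker (B.flip a) := fun w hw => by
    simpa using h w (by simpa using hw)
  obtain ⟨c, hc⟩ := Submodule.mem_span_singleton.1
    (by simpa using mem_span_of_iInf_ker_le_ker hker)
  have : c • b - a = 0 := hB _ fun w => by
    simpa [sub_eq_zero] using congrArg (· w) hc
  simpa using (LinearIndependent.pair_iff.1 hab) (-1) c (by rw [← this]; module)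

theorem mem_of_forall_smul_sub_smul_mem (hB : B.SeparatingRight) {a b : W}
    (hab : LinearIndependent K ![a, b]) {S : Submodule K W}
    (hS : ∀ w, B w a • b - B w b • a ∈ S) : b ∈ S := by
  obtain ⟨w, hwb, hwa⟩ := hB.exists_apply_eq_zero_and_apply_ne_zero hab
  simpa [hwb, hwa, S.smul_mem_iff] using hS w

end LinearMap.SeparatingRight

namespace CliffordAlgebra

variable {R M : Type*} [CommRing R] [AddCommGroup M] [Module R M] {Q : QuadraticForm R M}

theorem lie_ι_ι_mul_ι (w a b : M) :
    ⁅ι Q w, ι Q a * ι Q b⁆ =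
      ι Q (QuadraticMap.polar Q w a • b - QuadraticMap.polar Q w b • a) := by
  rw [Ring.lie_def, ← mul_assoc, ι_mul_ι_comm w a, sub_mul, mul_assoc (ι Q a), ι_mul_ι_comm w b,
    mul_sub, ← Algebra.commutes, map_sub, map_smul, map_smul, Algebra.smul_def, Algebra.smul_def]
  noncomm_ring

variable (Q) in
theorem ι_injective [Invertible (2 : R)] : Function.Injective (ι Q) := fun a b h =>
  (ExteriorAlgebra.ι_inj R a b).1 <| by
    simpa [changeForm_ι] using congrArg (equivExterior Q) h

end CliffordAlgebra

open CliffordAlgebra QuadraticMap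

theorem span_invariant_of_bogolyubov_fixes_product_general
    {F V : Type*} [Field F] [AddCommGroup V] [Module F V]
    (hchar : (2 : F) ≠ 0)
    (Q : QuadraticForm F V)
    (hQ : ∀ v : V, (∀ w : V, QuadraticMap.polar Q v w = 0) → v = 0)
    (φ : V →ₗ[F] V)
    (θ : CliffordAlgebra Q ≃ₐ[F] CliffordAlgebra Q)
    (hθ : ∀ v : V, θ (CliffordAlgebra.ι Q v) = CliffordAlgebra.ι Q (φ v))
    (v₁ v₂ : V) (hindep : LinearIndependent F ![v₁, v₂])
    (hfix : θ (CliffordAlgebra.ι Q v₁ * CliffordAlgebra.ι Q v₂) =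
      CliffordAlgebra.ι Q v₁ * CliffordAlgebra.ι Q v₂) :
    ∀ w ∈ Submodule.span F ({v₁, v₂} : Set V),
      φ w ∈ Submodule.span F ({v₁, v₂} : Set V) := by
  have : Invertible (2 : F) := invertibleOfNonzero hchar
  set S := Submodule.span F ({v₁, v₂} : Set V)
  have hsep : (polarBilin Q).SeparatingRight := fun v hv =>
    hQ v fun w => by simpa [polar_comm] using hv w
  have hφ_inj : Function.Injective φ := fun x y h =>
    ι_injective Q <| θ.injective <| by rw [hθ, hθ, h]
  have hindepφ : LinearIndependent F ![φ v₁, φ v₂] := by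
    rw [show ![φ v₁, φ v₂] = φ ∘ ![v₁, v₂] by ext i; fin_cases i <;> rfl]
    exact hindep.map' φ (LinearMap.ker_eq_bot.2 hφ_inj)
  have hprod : ι Q (φ v₁) * ι Q (φ v₂) = ι Q v₁ * ι Q v₂ := by
    rw [← hθ, ← hθ, ← map_mul, hfix]
  have hmem : ∀ w, polar Q w (φ v₁) • φ v₂ - polar Q w (φ v₂) • φ v₁ ∈ S := fun w => by
    have : polar Q w (φ v₁) • φ v₂ - polar Q w (φ v₂) • φ v₁ =
        polar Q w v₁ • v₂ - polar Q w v₂ • v₁ :=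
      ι_injective Q (by rw [← lie_ι_ι_mul_ι, hprod, lie_ι_ι_mul_ι])
    rw [this]
    exact S.sub_mem (S.smul_mem _ (Submodule.subset_span (by simp)))
      (S.smul_mem _ (Submodule.subset_span (by simp)))
  have hφv₂ : φ v₂ ∈ S := hsep.mem_of_forall_smul_sub_smul_mem hindepφ hmem
  have hφv₁ : φ v₁ ∈ S := hsep.mem_of_forall_smul_sub_smul_mem
    (LinearIndependent.pair_symm_iff.1 hindepφ) fun w => by simpa using S.neg_mem (hmem w)
  intro w hw
  exact Submodule.span_le (p := S.comap φ).2 (by simp [Set.insert_subset_iff, hφv₁, hφv₂]) hw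

/-- If `v₁, v₂ ∈ V` are linearly independent and the Bogolyubov automorphism `[φ]`
fixes `ι(v₁) ι(v₂)`, then the subspace `F·v₁ + F·v₂` is `φ`-invariant. -/
theorem span_invariant_of_bogolyubov_fixes_product
    {F V : Type*} [Field F] [AddCommGroup V] [Module F V]
    (hchar : (2 : F) ≠ 0)
    (Q : QuadraticForm F V)
    (hQ : ∀ v : V, (∀ w : V, QuadraticMap.polar Q v w = 0) → v = 0)
    (φ : V →ₗ[F] V) (hφbij : Function.Bijective φ)
    (hφQ : ∀ v : V, Q (φ v) = Q v)
    (θ : CliffordAlgebra Q ≃ₐ[F] CliffordAlgebra Q)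
    (hθ : ∀ v : V, θ (CliffordAlgebra.ι Q v) = CliffordAlgebra.ι Q (φ v))
    (v₁ v₂ : V) (hindep : LinearIndependent F ![v₁, v₂])
    (hfix : θ (CliffordAlgebra.ι Q v₁ * CliffordAlgebra.ι Q v₂) =
      CliffordAlgebra.ι Q v₁ * CliffordAlgebra.ι Q v₂) :
    ∀ w ∈ Submodule.span F ({v₁, v₂} : Set V),
      φ w ∈ Submodule.span F ({v₁, v₂} : Set V) :=
  span_invariant_of_bogolyubov_fixes_product_general hchar Q hQ φ θ hθ v₁ v₂ hindep hfix
end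

section
/- Let V be a vector space over a field F of characteristic ≠ 2 with a nondegenerate quadratic form Q, and let φ : V → V be an orthogonal linear transformation. If U ⊆ V is a finite-dimensional φ-invariant subspace such that V = U + V(1), where V(1) = ker(φ − Id), then U^⊥ = {v ∈ V : (v|U) = 0} is contained in V(1). -/
/-- If `U ⊆ V` is a finite-dimensional `φ`-invariant subspace with `V = U + V(1)`,
then `U^⊥ ⊆ V(1)`. -/
theorem perp_le_fixed_of_sup_eq_top
    {F V : Type*} [Field F] [AddCommGroup V] [Module F V]
    (hchar : (2 : F) ≠ 0)
    (Q : QuadraticForm F V)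
    (hQ : ∀ v : V, (∀ w : V, QuadraticMap.polar Q v w = 0) → v = 0)
    (φ : V →ₗ[F] V) (hφbij : Function.Bijective φ)
    (hφQ : ∀ v : V, Q (φ v) = Q v)
    (U : Submodule F V) (hUfd : FiniteDimensional F U)
    (hUinv : ∀ u ∈ U, φ u ∈ U)
    (hsup : U ⊔ eigSp φ 1 = ⊤) :
    ∀ v : V, (∀ u ∈ U, QuadraticMap.polar Q v u = 0) → v ∈ eigSp φ 1 := by
  intro v hv
  have hpolar : ∀ a b : V, QuadraticMap.polar Q (φ a) (φ b) = QuadraticMap.polar Q a b := by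
    intro a b
    simp [QuadraticMap.polar, ← map_add, hφQ]
  set ψ := φ.restrict hUinv with hψ
  have hψinj : Function.Injective ψ := fun a b h =>
    Subtype.ext (hφbij.1 (congrArg Subtype.val h))
  have hψsurj : Function.Surjective ψ := (LinearMap.injective_iff_surjective).1 hψinj
  have key : ∀ x : V, QuadraticMap.polar Q (φ v - v) x = 0 := by
    intro x
    have hx : x ∈ U ⊔ eigSp φ 1 := hsup ▸ Submodule.mem_top
    rcases Submodule.mem_sup.1 hx with ⟨u, hu, z, hz, rfl⟩
    have h1 : QuadraticMap.polar Q (φ v - v) u = 0 := by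
      obtain ⟨⟨u', hu'⟩, hww⟩ := hψsurj ⟨u, hu⟩
      have hφu : φ u' = u := congrArg Subtype.val hww
      rw [QuadraticMap.polar_sub_left, ← hφu, hpolar, hv u' hu', hφu,
        hv u hu, sub_zero]
    have hφz : φ z = z := by
      have := hz
      simp only [eigSp, LinearMap.mem_ker, LinearMap.sub_apply, LinearMap.smul_apply,
        LinearMap.id_coe, id_eq, one_smul, sub_eq_zero] at this
      exact this
    have h2 : QuadraticMap.polar Q (φ v - v) z = 0 := by
      rw [QuadraticMap.polar_sub_left]
      nth_rewrite 1 [← hφz]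
      rw [hpolar, sub_self]
    rw [QuadraticMap.polar_add_right, h1, h2, add_zero]
  have hz : φ v - v = 0 := hQ _ key
  simp only [eigSp, LinearMap.mem_ker, LinearMap.sub_apply, LinearMap.smul_apply,
    LinearMap.id_coe, id_eq, one_smul]
  exact hz
end

section
/- Let F be a field of characteristic ≠ 2, V a vector space over F with a nondegenerate quadratic form Q, and φ : V → V an orthogonal linear transformation with Bogolyubov automorphism [φ] of Cl(V,Q). If v, v₁, v₂ ∈ V are linearly independent and [φ](ι(v)ι(v₁)) = ι(v)ι(v₁) and [φ](ι(v)ι(v₂)) = ι(v)ι(v₂), then φ(v) ∈ F·v, i.e., v is an eigenvector of φ. -/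
open QuadraticMap CliffordAlgebra

/-- Nondegeneracy gives, for `u ≠ 0` and `u₁` not a multiple of `u`, a vector `x` with
`polar Q x u = 0` and `polar Q x u₁ = 1`. -/
lemma exists_polar_zero_one {F V : Type*} [Field F] [AddCommGroup V] [Module F V]
    (Q : QuadraticForm F V)
    (hQ : ∀ v : V, (∀ w : V, QuadraticMap.polar Q v w = 0) → v = 0)
    {u u₁ : V} (hu : u ≠ 0) (hu₁ : ∀ c : F, u₁ ≠ c • u) :
    ∃ x : V, polar Q x u = 0 ∧ polar Q x u₁ = 1 := by
  by_cases hker : ∃ x, polar Q x u = 0 ∧ polar Q x u₁ ≠ 0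
  · obtain ⟨x, h0, h1⟩ := hker
    refine ⟨(polar Q x u₁)⁻¹ • x, ?_, ?_⟩
    · rw [polar_smul_left, h0, smul_zero]
    · rw [polar_smul_left, smul_eq_mul, inv_mul_cancel₀ h1]
  · push_neg at hker
    exfalso
    have hy : ∃ y, polar Q y u ≠ 0 := by
      by_contra h
      push_neg at h
      exact hu (hQ u fun w => (polar_comm Q u w).trans (h w))
    obtain ⟨y, hy⟩ := hy
    set c : F := polar Q y u₁ / polar Q y u with hc
    apply hu₁ c
    have : u₁ - c • u = 0 := by
      apply hQ
      intro w
      have hz : polar Q (w - (polar Q w u / polar Q y u) • y) u = 0 := by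
        rw [polar_sub_left, polar_smul_left, smul_eq_mul,
          div_mul_cancel₀ _ hy, sub_self]
      have hz1 := hker _ hz
      rw [polar_sub_left, polar_smul_left, smul_eq_mul, sub_eq_zero] at hz1
      rw [polar_sub_left, polar_smul_left, smul_eq_mul, polar_comm Q u₁ w,
        polar_comm Q u w, hz1, hc]
      field_simp
      ring
    rw [sub_eq_zero] at this
    exact this

/-- The commutator of a vector with a product of two vectors in a Clifford algebra. -/
lemma clifford_commutator {F V : Type*} [Field F] [AddCommGroup V] [Module F V]
    (Q : QuadraticForm F V) (x a b : V) :
    ι Q x * (ι Q a * ι Q b) - (ι Q a * ι Q b) * ι Q x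
      = ι Q (polar Q x a • b - polar Q x b • a) := by
  have h1 := ι_mul_ι_comm (Q := Q) x a
  have h2 := ι_mul_ι_comm (Q := Q) x b
  rw [_root_.map_sub, _root_.map_smul, _root_.map_smul, Algebra.smul_def, Algebra.smul_def]
  rw [← mul_assoc, h1, sub_mul, mul_assoc (ι Q a), h2, mul_sub, mul_assoc]
  rw [← Algebra.commutes (polar Q x b) (ι Q a)]
  abel

/-- If `v, v₁, v₂ ∈ V` are linearly independent and the Bogolyubov automorphism `[φ]`
fixes both `ι(v) ι(v₁)` and `ι(v) ι(v₂)`, then `v` is an eigenvector of `φ`. -/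
theorem eigenvector_of_bogolyubov_fixes_products
    {F V : Type*} [Field F] [AddCommGroup V] [Module F V]
    (hchar : (2 : F) ≠ 0)
    (Q : QuadraticForm F V)
    (hQ : ∀ v : V, (∀ w : V, QuadraticMap.polar Q v w = 0) → v = 0)
    (φ : V →ₗ[F] V) (hφbij : Function.Bijective φ)
    (hφQ : ∀ v : V, Q (φ v) = Q v)
    (θ : CliffordAlgebra Q ≃ₐ[F] CliffordAlgebra Q)
    (hθ : ∀ v : V, θ (CliffordAlgebra.ι Q v) = CliffordAlgebra.ι Q (φ v))
    (v v₁ v₂ : V) (hindep : LinearIndependent F ![v, v₁, v₂])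
    (hfix₁ : θ (CliffordAlgebra.ι Q v * CliffordAlgebra.ι Q v₁) =
      CliffordAlgebra.ι Q v * CliffordAlgebra.ι Q v₁)
    (hfix₂ : θ (CliffordAlgebra.ι Q v * CliffordAlgebra.ι Q v₂) =
      CliffordAlgebra.ι Q v * CliffordAlgebra.ι Q v₂) :
    ∃ c : F, φ v = c • v := by
  haveI : Invertible (2 : F) := invertibleOfNonzero hchar
  -- ι is injective
  have hinj : Function.Injective (CliffordAlgebra.ι Q) := by
    intro a b hab
    have h := congrArg (CliffordAlgebra.equivExterior Q) hab
    simp only [CliffordAlgebra.equivExterior, CliffordAlgebra.changeFormEquiv_apply,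
      CliffordAlgebra.changeForm_ι] at h
    exact (ExteriorAlgebra.ι_inj F a b).mp h
  -- independence in coordinate form
  have hind : ∀ a b c : F, a • v + b • v₁ + c • v₂ = 0 → a = 0 ∧ b = 0 ∧ c = 0 := by
    intro a b c habc
    have := Fintype.linearIndependent_iff.mp hindep ![a, b, c]
    have h0 : ∑ i, (![a, b, c] i) • (![v, v₁, v₂] i) = 0 := by
      simpa [Fin.sum_univ_three] using habc
    exact ⟨this h0 0, this h0 1, this h0 2⟩
  have hv0 : v ≠ 0 := by
    intro h
    have := (hind 1 0 0 (by simp [h])).1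
    exact one_ne_zero this
  have hφv0 : φ v ≠ 0 := fun h => hv0 (hφbij.injective (by simp [h]))
  have hmul : ∀ c : F, ∀ w : V, φ w = c • φ v → w = c • v := by
    intro c w h
    apply hφbij.injective
    rw [h, _root_.map_smul]
  have hφv₁ : ∀ c : F, φ v₁ ≠ c • φ v := by
    intro c h
    have h1 := hmul c v₁ h
    have := hind (-c) 1 0 (by rw [h1]; simp)
    exact one_ne_zero this.2.1
  have hφv₂ : ∀ c : F, φ v₂ ≠ c • φ v := by
    intro c h
    have h1 := hmul c v₂ h
    have := hind (-c) 0 1 (by rw [h1]; simp)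
    exact one_ne_zero this.2.2
  -- the fixed products
  have hA₁ : ι Q (φ v) * ι Q (φ v₁) = ι Q v * ι Q v₁ := by
    rw [← hθ, ← hθ, ← map_mul]; exact hfix₁
  have hA₂ : ι Q (φ v) * ι Q (φ v₂) = ι Q v * ι Q v₂ := by
    rw [← hθ, ← hθ, ← map_mul]; exact hfix₂
  -- vector equations via commutators
  have vecEq : ∀ (w w' : V), ι Q w * ι Q w' = ι Q v * ι Q v₁ →
      ∀ x : V, polar Q x w • w' - polar Q x w' • w = polar Q x v • v₁ - polar Q x v₁ • v := by
    intro w w' hww x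
    apply hinj
    rw [← clifford_commutator, ← clifford_commutator, hww]
  have vecEq₁ := vecEq (φ v) (φ v₁) hA₁
  have vecEq₂ : ∀ x : V,
      polar Q x (φ v) • (φ v₂) - polar Q x (φ v₂) • (φ v)
        = polar Q x v • v₂ - polar Q x v₂ • v := by
    intro x
    apply hinj
    rw [← clifford_commutator, ← clifford_commutator, hA₂]
  -- choose suitable x, y
  obtain ⟨x, hx0, hx1⟩ := exists_polar_zero_one Q hQ hφv0 hφv₁
  obtain ⟨y, hy0, hy1⟩ := exists_polar_zero_one Q hQ hφv0 hφv₂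
  have e1 : φ v = polar Q x v₁ • v - polar Q x v • v₁ := by
    have h := vecEq₁ x
    rw [hx0, hx1, zero_smul, one_smul, zero_sub] at h
    have h2 : φ v = -(polar Q x v • v₁ - polar Q x v₁ • v) := by rw [← h, neg_neg]
    rw [h2]; abel
  have e2 : φ v = polar Q y v₂ • v - polar Q y v • v₂ := by
    have h := vecEq₂ y
    rw [hy0, hy1, zero_smul, one_smul, zero_sub] at h
    have h2 : φ v = -(polar Q y v • v₂ - polar Q y v₂ • v) := by rw [← h, neg_neg]
    rw [h2]; abel
  have e3 : (polar Q x v₁ - polar Q y v₂) • v + (-(polar Q x v)) • v₁ + polar Q y v • v₂ = 0 := by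
    have h := e1.symm.trans e2
    linear_combination (norm := module) h
  obtain ⟨-, hb, -⟩ := hind _ _ _ e3
  refine ⟨polar Q x v₁, ?_⟩
  rw [e1]
  have : polar Q x v = 0 := by
    have := hb; rwa [neg_eq_zero] at this
  rw [this, zero_smul, sub_zero]
end

section
/- Let F be a field of characteristic ≠ 2, V a vector space over F with a nondegenerate quadratic form Q, and φ : V → V an orthogonal linear transformation with Bogolyubov automorphism [φ] of Cl(V,Q). Suppose V' ⊆ V is a φ-invariant nondegenerate subspace of even dimension n with orthonormal basis v₁, …, vₙ (Q(vᵢ) = 1, (vᵢ|vⱼ) = 0 for i ≠ j), and suppose V'^⊥ ⊆ V(1) = ker(φ − Id). Then V(1) has finite codimension in V, and for every u ∈ V'^⊥ one has [φ](ι(v₁)⋯ι(vₙ)ι(u)) = det(φ|_{V/V(1)}) · ι(v₁)⋯ι(vₙ)ι(u), where φ|_{V/V(1)} is the linear map induced by φ on the finite-dimensional quotient V/V(1). -/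
open Module

theorem AlternatingMap.apply_eq_basis_det_smul {R M N ι : Type*} [CommRing R]
    [AddCommGroup M] [Module R M] [AddCommGroup N] [Module R N] [Fintype ι] [DecidableEq ι]
    (e : Basis ι R M) (g : M [⋀^ι]→ₗ[R] N) (x : ι → M) : g x = e.det x • g e := by
  suffices g = (LinearMap.toSpanSingleton R N (g e)).compAlternatingMap e.det by
    conv_lhs => rw [this]
    rfl
  refine e.ext_alternating fun σ hσ => ?_
  let σ' : Equiv.Perm ι := Equiv.ofBijective σ (Finite.injective_iff_bijective.1 hσ)
  change g (e ∘ σ') = e.det (e ∘ σ') • g e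
  rw [g.map_perm, e.det.map_perm, e.det_self, Units.smul_def, Units.smul_def, zsmul_one,
    Int.cast_smul_eq_zsmul]

theorem AlternatingMap.map_comp_basis_eq_det_smul {R M N ι : Type*} [CommRing R]
    [AddCommGroup M] [Module R M] [AddCommGroup N] [Module R N] [Fintype ι] [DecidableEq ι]
    (e : Basis ι R M) (g : M [⋀^ι]→ₗ[R] N) (f : M →ₗ[R] M) :
    g (f ∘ e) = LinearMap.det f • g e := by
  rw [g.apply_eq_basis_det_smul e, e.det_comp, e.det_self, mul_one]

theorem LinearMap.det_eq_det_of_surjective_of_comp_eq {K M N : Type*} [Field K]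
    [AddCommGroup M] [Module K M] [FiniteDimensional K M] [AddCommGroup N] [Module K N]
    {π : M →ₗ[K] N} (hπ : Function.Surjective π) {f : M →ₗ[K] M} {g : N →ₗ[K] N}
    (hcomm : π ∘ₗ f = g ∘ₗ π) (hfix : ∀ x ∈ LinearMap.ker π, f x = x) :
    LinearMap.det g = LinearMap.det f := by
  have hle : ker π ≤ (ker π).comap f := fun x hx => by
    rw [Submodule.mem_comap, hfix x hx]
    exact hx
  have hres : f.restrict hle = LinearMap.id := LinearMap.ext fun x => Subtype.ext (hfix x x.2)
  let E := π.quotKerEquivOfSurjective hπ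
  have hconj : g = E ∘ₗ (ker π).mapQ _ f hle ∘ₗ E.symm := by
    ext y
    obtain ⟨x, rfl⟩ := hπ y
    have hx : E.symm (π x) = Submodule.Quotient.mk x := E.symm_apply_eq.2 rfl
    simp only [LinearMap.comp_apply, LinearEquiv.coe_coe, hx, Submodule.mapQ_apply]
    exact (LinearMap.congr_fun hcomm x).symm
  rw [det_eq_det_mul_det (ker π) f hle, hres, det_id, one_mul, hconj, det_conj]

theorem LinearMap.BilinForm.sup_orthogonal_eq_top_of_restrict_nondegenerate {K V : Type*}
    [Field K] [AddCommGroup V] [Module K V] {B : LinearMap.BilinForm K V} (hB : B.IsRefl)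
    {W : Submodule K V} [FiniteDimensional K W] (hW : (B.restrict W).Nondegenerate) :
    W ⊔ B.orthogonal W = ⊤ := by
  refine eq_top_iff.2 fun x _ => Submodule.mem_sup.2 ?_
  let a : W := ((B.restrict W).toDual hW).symm (B x ∘ₗ W.subtype)
  have ha : ∀ w ∈ W, B a w = B x w := fun w hw =>
    apply_toDual_symm_apply (hB := hW) (B x ∘ₗ W.subtype) ⟨w, hw⟩
  refine ⟨a, a.2, x - a, fun w hw => hB _ _ ?_, add_sub_cancel _ _⟩
  rw [map_sub, LinearMap.sub_apply, ha w hw, sub_self]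

theorem QuadraticMap.sup_eq_top_of_polar_orthogonal_le {K V : Type*} [Field K] [AddCommGroup V]
    [Module K V] {Q : QuadraticForm K V} {W U : Submodule K V} [FiniteDimensional K W]
    (hW : ∀ u ∈ W, (∀ w ∈ W, polar Q u w = 0) → u = 0)
    (hU : ∀ x, (∀ w ∈ W, polar Q x w = 0) → x ∈ U) : W ⊔ U = ⊤ := by
  let B : LinearMap.BilinForm K V := polarBilin Q
  have hB : B.IsRefl := fun x y h => by rwa [polarBilin_apply_apply, polar_comm] at h
  have hsep : ∀ x : W, (∀ y : W, polar Q x y = 0) → x = 0 := fun x hx =>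
    Subtype.ext (hW x x.2 fun w hw => hx ⟨w, hw⟩)
  have hnd : (B.restrict W).Nondegenerate :=
    ⟨hsep, fun x hx => hsep x fun y => (polar_comm _ _ _).trans (hx y)⟩
  have horth : B.orthogonal W ≤ U := fun x hx =>
    hU x fun w hw => (polar_comm _ _ _).trans (hx w hw)
  exact top_unique <|
    (B.sup_orthogonal_eq_top_of_restrict_nondegenerate hB hnd).ge.trans (sup_le_sup_left horth _)

namespace CliffordAlgebra

variable {R M : Type*} [CommRing R] [AddCommGroup M] [Module R M]

theorem contractLeft_prod_map_ι_eq_zero {Q : QuadraticForm R M} (d : Dual R M) :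
    ∀ {l : List M}, (∀ x ∈ l, d x = 0) → contractLeft d (l.map (ι Q)).prod = 0
  | [], _ => by simp
  | a :: l, hl => by
    rw [List.map_cons, List.prod_cons, contractLeft_ι_mul, hl a List.mem_cons_self,
      contractLeft_prod_map_ι_eq_zero d fun x hx => hl x (List.mem_cons_of_mem a hx)]
    simp

theorem changeForm_prod_map_ι {Q Q' : QuadraticForm R M} {B : LinearMap.BilinForm R M}
    (h : B.toQuadraticMap = Q' - Q) :
    ∀ {l : List M}, l.Pairwise (fun a b => B a b = 0) →
      changeForm h (l.map (ι Q)).prod = (l.map (ι Q')).prod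
  | [], _ => by simp
  | a :: l, hl => by
    rw [List.pairwise_cons] at hl
    rw [List.map_cons, List.prod_cons, changeForm_ι_mul, changeForm_prod_map_ι h hl.2,
      contractLeft_prod_map_ι_eq_zero _ hl.1, sub_zero, List.map_cons, List.prod_cons]

theorem equivExterior_prod_ofFn_ι [Invertible (2 : R)] {Q : QuadraticForm R M} {n : ℕ}
    {v : Fin n → M} (hv : Pairwise fun i j => QuadraticMap.polar Q (v i) (v j) = 0) :
    equivExterior Q (List.ofFn fun i => ι Q (v i)).prod = ExteriorAlgebra.ιMulti R n v := by
  have hv' : (List.ofFn v).Pairwise fun a b => QuadraticMap.associated (-Q) a b = 0 :=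
    List.pairwise_ofFn.2 fun i j hij => by
      rw [QuadraticMap.associated_apply, ← QuadraticMap.polar, FunLike.coe_neg,
        QuadraticMap.polar_neg, hv hij.ne, neg_zero, smul_zero]
  have h := changeForm_prod_map_ι changeForm.associated_neg_proof hv'
  rw [List.map_ofFn, List.map_ofFn] at h
  exact h

theorem prod_ofFn_ι_map_eq_det_smul [Invertible (2 : R)] {Q : QuadraticForm R M}
    {W : Submodule R M} {n : ℕ} (e : Basis (Fin n) R W)
    (he : Pairwise fun i j => QuadraticMap.polar Q (e i) (e j) = 0)
    {f : M →ₗ[R] M} (hfQ : ∀ x, Q (f x) = Q x) (hfW : ∀ x ∈ W, f x ∈ W) :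
    (List.ofFn fun i => ι Q (f (e i))).prod =
      LinearMap.det (f.restrict hfW) • (List.ofFn fun i => ι Q (e i)).prod := by
  have hfe : Pairwise fun i j => QuadraticMap.polar Q (f (e i)) (f (e j)) = 0 := fun i j hij => by
    simpa only [QuadraticMap.polar, ← map_add, hfQ] using he hij
  apply (equivExterior Q).injective
  rw [map_smul, equivExterior_prod_ofFn_ι he, equivExterior_prod_ofFn_ι hfe]
  exact ((ExteriorAlgebra.ιMulti R n).compLinearMap W.subtype).map_comp_basis_eq_det_smul e
    (f.restrict hfW)

end CliffordAlgebra

theorem mem_eigSp_one_iff {F V : Type*} [Field F] [AddCommGroup V] [Module F V]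
    {φ : V →ₗ[F] V} {x : V} : x ∈ eigSp φ 1 ↔ φ x = x := by
  simp [eigSp, sub_eq_zero]

theorem bogolyubov_smul_det_on_top_product_general
    {F V : Type*} [Field F] [AddCommGroup V] [Module F V]
    (hchar : (2 : F) ≠ 0)
    (Q : QuadraticForm F V)
    (φ : V →ₗ[F] V)
    (hφQ : ∀ v : V, Q (φ v) = Q v)
    (θ : CliffordAlgebra Q ≃ₐ[F] CliffordAlgebra Q)
    (hθ : ∀ v : V, θ (CliffordAlgebra.ι Q v) = CliffordAlgebra.ι Q (φ v))
    (V' : Submodule F V)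
    (hV'inv : ∀ u ∈ V', φ u ∈ V')
    (hV'nd : ∀ u ∈ V', (∀ w ∈ V', QuadraticMap.polar Q u w = 0) → u = 0)
    (n : ℕ) (v : Fin n → V)
    (hindep : LinearIndependent F v)
    (hspan : Submodule.span F (Set.range v) = V')
    (hortho : ∀ i j, i ≠ j → QuadraticMap.polar Q (v i) (v j) = 0)
    (hperp : ∀ w : V, (∀ u ∈ V', QuadraticMap.polar Q w u = 0) → w ∈ eigSp φ 1) :
    FiniteDimensional F (V ⧸ eigSp φ 1) ∧
      ∀ u : V, (∀ w ∈ V', QuadraticMap.polar Q u w = 0) →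
        θ ((List.ofFn fun i => CliffordAlgebra.ι Q (v i)).prod * CliffordAlgebra.ι Q u) =
          LinearMap.det (quotMap φ 1) •
            ((List.ofFn fun i => CliffordAlgebra.ι Q (v i)).prod *
              CliffordAlgebra.ι Q u) := by
  let : Invertible (2 : F) := invertibleOfNonzero hchar
  let e : Basis (Fin n) F V' := (Basis.span hindep).map (LinearEquiv.ofEq _ _ hspan)
  have he : ∀ i, (e i : V) = v i := fun i => by simp [e, Basis.span_apply]
  have : FiniteDimensional F V' := Module.Finite.of_basis e
  let π : V' →ₗ[F] V ⧸ eigSp φ 1 := (eigSp φ 1).mkQ ∘ₗ V'.subtype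
  have hπ : Function.Surjective π := by
    rw [← LinearMap.range_eq_top, LinearMap.range_comp, Submodule.range_subtype,
      Submodule.map_mkQ_eq_top, sup_comm,
      QuadraticMap.sup_eq_top_of_polar_orthogonal_le hV'nd hperp]
  refine ⟨Module.Finite.of_surjective π hπ, fun u hu => ?_⟩
  have hdet : LinearMap.det (quotMap φ 1) = LinearMap.det (φ.restrict hV'inv) :=
    LinearMap.det_eq_det_of_surjective_of_comp_eq hπ rfl fun x hx =>
      Subtype.ext (mem_eigSp_one_iff.1 ((Submodule.Quotient.mk_eq_zero _).1 hx))
  have hθP : θ (List.ofFn fun i => CliffordAlgebra.ι Q (v i)).prod =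
      (List.ofFn fun i => CliffordAlgebra.ι Q (φ (v i))).prod := by
    rw [map_list_prod, List.map_ofFn]
    simp only [Function.comp_def, hθ]
  have he_ortho : Pairwise fun i j => QuadraticMap.polar Q (e i) (e j) = 0 := fun i j hij => by
    simpa only [he] using hortho i j hij
  simp_rw [← he] at hθP ⊢
  rw [map_mul, hθP, CliffordAlgebra.prod_ofFn_ι_map_eq_det_smul e he_ortho hφQ hV'inv, hθ,
    mem_eigSp_one_iff.1 (hperp u hu), hdet, smul_mul_assoc]

/-- Suppose `V' ⊆ V` is a `φ`-invariant nondegenerate subspace of even dimension `n`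
with orthonormal basis `v₁, …, vₙ`, and `V'^⊥ ⊆ V(1) = ker (φ - Id)`.  Then `V(1)`
has finite codimension in `V`, and for every `u ∈ V'^⊥`,
`[φ](ι(v₁)⋯ι(vₙ) ι(u)) = det (φ|_{V/V(1)}) · ι(v₁)⋯ι(vₙ) ι(u)`. -/
theorem bogolyubov_smul_det_on_top_product
    {F V : Type*} [Field F] [AddCommGroup V] [Module F V]
    (hchar : (2 : F) ≠ 0)
    (Q : QuadraticForm F V)
    (hQ : ∀ v : V, (∀ w : V, QuadraticMap.polar Q v w = 0) → v = 0)
    (φ : V →ₗ[F] V) (hφbij : Function.Bijective φ)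
    (hφQ : ∀ v : V, Q (φ v) = Q v)
    (θ : CliffordAlgebra Q ≃ₐ[F] CliffordAlgebra Q)
    (hθ : ∀ v : V, θ (CliffordAlgebra.ι Q v) = CliffordAlgebra.ι Q (φ v))
    (V' : Submodule F V) (hV'fd : FiniteDimensional F V')
    (hV'inv : ∀ u ∈ V', φ u ∈ V')
    (hV'nd : ∀ u ∈ V', (∀ w ∈ V', QuadraticMap.polar Q u w = 0) → u = 0)
    (n : ℕ) (hn : Even n) (v : Fin n → V)
    (hvV' : ∀ i, v i ∈ V')
    (hindep : LinearIndependent F v)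
    (hspan : Submodule.span F (Set.range v) = V')
    (hQv : ∀ i, Q (v i) = 1)
    (hortho : ∀ i j, i ≠ j → QuadraticMap.polar Q (v i) (v j) = 0)
    (hperp : ∀ w : V, (∀ u ∈ V', QuadraticMap.polar Q w u = 0) → w ∈ eigSp φ 1) :
    FiniteDimensional F (V ⧸ eigSp φ 1) ∧
      ∀ u : V, (∀ w ∈ V', QuadraticMap.polar Q u w = 0) →
        θ ((List.ofFn fun i => CliffordAlgebra.ι Q (v i)).prod * CliffordAlgebra.ι Q u) =
          LinearMap.det (quotMap φ 1) •
            ((List.ofFn fun i => CliffordAlgebra.ι Q (v i)).prod *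
              CliffordAlgebra.ι Q u) :=
  bogolyubov_smul_det_on_top_product_general hchar Q φ hφQ θ hθ V' hV'inv hV'nd n v hindep hspan
    hortho hperp
end

section
/- Let F be a field of characteristic ≠ 2, V an infinite-dimensional vector space over F with a nondegenerate quadratic form Q, and φ : V → V an orthogonal linear transformation with Bogolyubov automorphism [φ] of Cl(V,Q). Suppose V' ⊆ V is a φ-invariant nondegenerate finite-dimensional subspace of even dimension such that V'^⊥ ⊆ V(1) = ker(φ − Id) and det(φ|_{V/V(1)}) = 1, where φ|_{V/V(1)} is the map induced by φ on the finite-dimensional quotient V/V(1). Then [φ](z) = z for every z in the centralizer of the subalgebra of Cl(V,Q) generated by ι(V'). -/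
open Module

namespace QuadraticMap

variable {F W : Type*} [Field F] [AddCommGroup W] [Module F W] {q : QuadraticForm F W}

theorem polar_self_eq_two_mul (v : W) : polar q v v = 2 * q v := by
  rw [polar_self, nsmul_eq_mul, Nat.cast_ofNat]

theorem map_sub_eq_add_sub_polar (a b : W) : q (a - b) = q a + q b - polar q a b := by
  rw [sub_eq_add_neg, QuadraticMap.map_add q, QuadraticMap.map_neg, polar_neg_right]
  ring

theorem polar_restrict (U : Submodule F W) (u v : U) : polar (q.restrict U) u v = polar q u v :=
  rfl

theorem polar_apply_apply_of_forall_map_apply {σ : Module.End F W} (hσ : ∀ w, q (σ w) = q w)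
    (a b : W) : polar q (σ a) (σ b) = polar q a b := by
  simp only [polar, ← map_add, hσ]

variable (q) in
/-- For isotropic `r` this is the identity, since then `(q r)⁻¹ = 0`. -/
noncomputable def reflection (r : W) : Module.End F W :=
  preReflection r ((q r)⁻¹ • polarBilin q r)

theorem reflection_apply (r v : W) :
    q.reflection r v = v - ((q r)⁻¹ * polar q r v) • r := by
  simp [reflection, preReflection_apply]

theorem inv_smul_polarBilin_self {r : W} (hr : q r ≠ 0) :
    ((q r)⁻¹ • polarBilin q r) r = 2 := by
  rw [LinearMap.smul_apply, polarBilin_apply_apply, polar_self_eq_two_mul, smul_eq_mul]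
  field_simp

theorem reflection_self {r : W} (hr : q r ≠ 0) : q.reflection r r = -r :=
  preReflection_apply_self (inv_smul_polarBilin_self hr)

theorem reflection_involutive {r : W} (hr : q r ≠ 0) : Function.Involutive (q.reflection r) :=
  involutive_preReflection (inv_smul_polarBilin_self hr)

theorem reflection_mul_self {r : W} (hr : q r ≠ 0) : q.reflection r * q.reflection r = 1 :=
  LinearMap.ext (reflection_involutive hr)

theorem reflection_apply_of_polar_eq_zero {r v : W} (h : polar q r v = 0) :
    q.reflection r v = v := by
  simp [reflection_apply, h]

theorem map_reflection (r v : W) : q (q.reflection r v) = q v := by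
  by_cases hr : q r = 0
  · simp [reflection_apply, hr]
  rw [reflection_apply, sub_eq_add_neg, QuadraticMap.map_add q, ← neg_smul, QuadraticMap.map_smul,
    polar_smul_right, polar_comm q v r, smul_eq_mul, smul_eq_mul]
  field_simp
  ring

theorem det_reflection [FiniteDimensional F W] {r : W} (hr : q r ≠ 0) :
    LinearMap.det (q.reflection r) = -1 := by
  have hr0 : r ≠ 0 := by rintro rfl; simp at hr
  have hL : ∀ x ∈ F ∙ r, q.reflection r x ∈ F ∙ r := by
    refine (Submodule.span_singleton_le_iff_mem _ ((F ∙ r).comap (q.reflection r))).mpr ?_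
    rw [Submodule.mem_comap, reflection_self hr]
    exact Submodule.neg_mem _ (Submodule.mem_span_singleton_self r)
  have hrestrict : (q.reflection r).restrict hL = (-1 : F) • LinearMap.id := by
    ext ⟨x, hx⟩
    obtain ⟨c, rfl⟩ := Submodule.mem_span_singleton.mp hx
    simp [LinearMap.restrict_apply, reflection_self hr]
  have hmapQ : (F ∙ r).mapQ (F ∙ r) (q.reflection r) hL = LinearMap.id := by
    ext v
    simp only [LinearMap.coe_comp, Function.comp_apply, Submodule.mkQ_apply,
      Submodule.mapQ_apply, LinearMap.id_apply, Submodule.Quotient.eq, reflection_apply,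
      sub_sub_cancel_left]
    exact Submodule.neg_mem _ (Submodule.smul_mem _ _ (Submodule.mem_span_singleton_self r))
  rw [LinearMap.det_eq_det_mul_det _ _ hL, hrestrict, hmapQ, LinearMap.det_smul,
    finrank_span_singleton hr0]
  simp

theorem det_prod_reflection [FiniteDimensional F W] {l : List W} (hl : ∀ r ∈ l, q r ≠ 0) :
    LinearMap.det (l.map q.reflection).prod = (-1) ^ l.length := by
  rw [map_list_prod, List.map_map, List.map_congr_left (f := LinearMap.det ∘ q.reflection)
    (g := fun _ => -1) fun r hr => det_reflection (hl r hr),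
    List.map_const', List.prod_replicate]

theorem map_prod_reflection (l : List W) (v : W) : q ((l.map q.reflection).prod v) = q v := by
  induction l with
  | nil => rfl
  | cons r l ih => simp [map_reflection, ih]

theorem prod_reflection_reverse_mul_prod_reflection {l : List W} (hl : ∀ r ∈ l, q r ≠ 0) :
    (l.reverse.map q.reflection).prod * (l.map q.reflection).prod = 1 := by
  induction l with
  | nil => simp
  | cons r l ih =>
    simp only [List.reverse_cons, List.map_append, List.prod_append, List.map_cons,
      List.prod_cons, List.map_nil, List.prod_nil, mul_one]
    rw [mul_assoc, ← mul_assoc (q.reflection r), reflection_mul_self (hl r (by simp)), one_mul,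
      ih fun r' hr' => hl r' (by simp [hr'])]

theorem prod_reflection_apply_of_forall_polar_eq_zero {l : List W} {v : W}
    (h : ∀ r ∈ l, polar q r v = 0) : (l.map q.reflection).prod v = v := by
  induction l with
  | nil => rfl
  | cons r l ih =>
    simp only [List.map_cons, List.prod_cons, Module.End.mul_apply]
    rw [ih fun r' hr' => h r' (by simp [hr']), reflection_apply_of_polar_eq_zero (h r (by simp))]

theorem reflection_sub_apply {a b : W} (hab : q a = q b) (h : q (a - b) ≠ 0) :
    q.reflection (a - b) b = a := by
  have hpolar : polar q (a - b) b = -q (a - b) := by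
    rw [polar_sub_left, polar_self_eq_two_mul, map_sub_eq_add_sub_polar, hab]
    ring
  rw [reflection_apply, hpolar, mul_neg, inv_mul_cancel₀ h, neg_smul, one_smul, sub_neg_eq_add,
    add_sub_cancel]

theorem reflection_add_apply {a b : W} (hab : q a = q b) (h : q (a + b) ≠ 0) :
    q.reflection (a + b) b = -a := by
  have hpolar : polar q (a + b) b = q (a + b) := by
    rw [polar_add_left, polar_self_eq_two_mul, QuadraticMap.map_add q, hab]
    ring
  rw [reflection_apply, hpolar, inv_mul_cancel₀ h, one_smul]
  abel

theorem exists_prod_reflection_apply_eq (h2 : (2 : F) ≠ 0) {a b : W} (hab : q a = q b)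
    (ha : q a ≠ 0) : ∃ l : List W, (∀ r ∈ l, q r ≠ 0) ∧ (l.map q.reflection).prod b = a := by
  by_cases h : q (a - b) = 0
  · have hsum : q (a + b) = 4 * q a := by
      rw [map_sub_eq_add_sub_polar] at h
      rw [QuadraticMap.map_add q]
      linear_combination -h - 2 * hab
    have h' : q (a + b) ≠ 0 := by
      rw [hsum]
      exact mul_ne_zero (by simpa [show (4 : F) = 2 * 2 by norm_num] using h2) ha
    refine ⟨[a, a + b], by simp [ha, h'], ?_⟩
    simp [reflection_add_apply hab h', reflection_self ha]
  · exact ⟨[a - b], by simp [h], by simp [reflection_sub_apply hab h]⟩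

theorem exists_ne_zero_of_separatingLeft [Nontrivial W] (hq : (polarBilin q).SeparatingLeft) :
    ∃ v, q v ≠ 0 := by
  by_contra! h
  obtain ⟨v, hv⟩ := exists_ne (0 : W)
  exact hv (hq v fun w => by simp [polar, h])

theorem isCompl_orthogonalBilin_polarBilin {U : Submodule F W} [FiniteDimensional F U]
    (hU : (polarBilin (q.restrict U)).SeparatingLeft) :
    IsCompl U (U.orthogonalBilin (polarBilin q)) := by
  constructor
  · rw [Submodule.disjoint_def]
    intro x hxU hx
    refine congrArg Subtype.val (hU ⟨x, hxU⟩ fun n => ?_)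
    rw [polarBilin_apply_apply, polar_restrict, polar_comm]
    exact hx n n.2
  · rw [Submodule.codisjoint_iff_exists_add_eq]
    intro v
    have hsurj : Function.Surjective (polarBilin (q.restrict U)) :=
      (LinearMap.injective_iff_surjective_of_finrank_eq_finrank Subspace.dual_finrank_eq.symm).mp
        (LinearMap.ker_eq_bot.mp (LinearMap.separatingLeft_iff_ker_eq_bot.mp hU))
    obtain ⟨u, hu⟩ := hsurj ((polarBilin q v).comp U.subtype)
    refine ⟨u, v - u, u.2, fun n hn => ?_, add_sub_cancel _ _⟩
    have hun : polar q u n = polar q v n := LinearMap.congr_fun hu ⟨n, hn⟩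
    simp [polar_comm q n, hun]

theorem separatingLeft_polarBilin_restrict (hq : (polarBilin q).SeparatingLeft)
    {U C : Submodule F W} (hUC : Codisjoint U C) (hC : C ≤ U.orthogonalBilin (polarBilin q)) :
    (polarBilin (q.restrict U)).SeparatingLeft := by
  rintro ⟨u, hu⟩ h
  refine Subtype.ext (hq u fun w => ?_)
  obtain ⟨x, c, hx, hc, rfl⟩ := Submodule.codisjoint_iff_exists_add_eq.mp hUC w
  rw [map_add, ← h ⟨x, hx⟩, hC hc u hu, add_zero]
  rfl

theorem reflection_restrict_apply (U : Submodule F W) (r u : U) :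
    ((q.restrict U).reflection r u : W) = q.reflection r u := by
  simp [reflection_apply, polar_restrict]

theorem prod_reflection_restrict_apply (U : Submodule F W) (l : List U) (u : U) :
    ((l.map (q.restrict U).reflection).prod u : W) =
      ((l.map U.subtype).map q.reflection).prod u := by
  induction l with
  | nil => rfl
  | cons r l ih => simp [reflection_restrict_apply, ih]

theorem prod_reflection_map_subtype_eq {U C : Submodule F W} (hUC : Codisjoint U C)
    (hC : C ≤ U.orthogonalBilin (polarBilin q)) {σ : Module.End F W} (hσU : ∀ u ∈ U, σ u ∈ U)
    (hσC : ∀ c ∈ C, σ c = c) {l : List U}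
    (hl : (l.map (q.restrict U).reflection).prod = σ.restrict hσU) :
    ((l.map U.subtype).map q.reflection).prod = σ := by
  refine LinearMap.ext_on_codisjoint hUC (fun u hu => ?_) (fun c hc => ?_)
  · rw [← prod_reflection_restrict_apply U l ⟨u, hu⟩, hl]
    rfl
  · rw [prod_reflection_apply_of_forall_polar_eq_zero, hσC c hc]
    intro r hr
    obtain ⟨r, -, rfl⟩ := List.mem_map.mp hr
    exact hC hc r r.2

theorem apply_mem_orthogonalBilin_span_singleton {σ : Module.End F W}
    (hσ : ∀ w, q (σ w) = q w) {v u : W} (hσv : σ v = v)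
    (hu : u ∈ (F ∙ v).orthogonalBilin (polarBilin q)) :
    σ u ∈ (F ∙ v).orthogonalBilin (polarBilin q) := by
  simp only [LinearMap.orthogonal_span_singleton_eq_to_lin_ker, LinearMap.mem_ker,
    polarBilin_apply_apply] at hu ⊢
  rw [← hσv, polar_apply_apply_of_forall_map_apply hσ, hu]

/-- The Cartan–Dieudonné theorem. -/
theorem exists_prod_reflection_eq [FiniteDimensional F W] (h2 : (2 : F) ≠ 0)
    (hq : (polarBilin q).SeparatingLeft) {σ : Module.End F W} (hσ : ∀ w, q (σ w) = q w) :
    ∃ l : List W, (∀ r ∈ l, q r ≠ 0) ∧ (l.map q.reflection).prod = σ := by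
  obtain ⟨n, hn⟩ : ∃ n, finrank F W = n := ⟨_, rfl⟩
  induction n using Nat.strong_induction_on generalizing W with
  | _ n ih =>
  rcases subsingleton_or_nontrivial W with hW | hW
  · exact ⟨[], by simp, Subsingleton.elim _ _⟩
  obtain ⟨v, hv⟩ := exists_ne_zero_of_separatingLeft hq
  obtain ⟨l₀, hl₀, hl₀σ⟩ := exists_prod_reflection_apply_eq h2 (hσ v).symm hv
  -- `τ` fixes the anisotropic `v`, so it is determined by its restriction to `v^⊥`, where
  -- induction applies; `σ` is recovered since reflections are involutions.
  set τ := (l₀.map q.reflection).prod * σ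
  have hτ : ∀ w, q (τ w) = q w := fun w => by simp [τ, map_prod_reflection, hσ]
  have hτv : τ v = v := hl₀σ
  set U := (F ∙ v).orthogonalBilin (polarBilin q)
  have hcompl : IsCompl (F ∙ v) U := LinearMap.isCompl_span_singleton_orthogonal <| by
    rw [polarBilin_apply_apply, polar_self_eq_two_mul]
    exact mul_ne_zero h2 hv
  have hτU : ∀ u ∈ U, τ u ∈ U := fun u => apply_mem_orthogonalBilin_span_singleton hτ hτv
  have hτC : ∀ c ∈ F ∙ v, τ c = c := by
    intro c hc
    obtain ⟨a, rfl⟩ := Submodule.mem_span_singleton.mp hc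
    rw [map_smul, hτv]
  have hC : F ∙ v ≤ U.orthogonalBilin (polarBilin q) := fun c hc u hu => by
    rw [polarBilin_apply_apply, polar_comm]
    exact hu c hc
  have hrank : finrank F U < n := by
    have := Submodule.finrank_add_eq_of_isCompl hcompl
    rw [finrank_span_singleton (by rintro rfl; simp at hv)] at this
    omega
  obtain ⟨l₁, hl₁, hl₁τ⟩ := ih _ hrank (separatingLeft_polarBilin_restrict hq
    hcompl.codisjoint.symm hC) (σ := τ.restrict hτU) (fun u => hτ u) rfl
  refine ⟨l₀.reverse ++ l₁.map U.subtype, ?_, ?_⟩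
  · simp only [List.mem_append, List.mem_reverse, List.mem_map]
    rintro r (hr | ⟨r, hr, rfl⟩)
    exacts [hl₀ r hr, hl₁ r hr]
  · rw [List.map_append, List.prod_append, prod_reflection_map_subtype_eq hcompl.codisjoint.symm
      hC hτU hτC hl₁τ, ← mul_assoc, prod_reflection_reverse_mul_prod_reflection hl₀, one_mul]

end QuadraticMap

section Eigenspace

variable {F V : Type*} [Field F] [AddCommGroup V] [Module F V]

theorem mem_eigSp {f : V →ₗ[F] V} {α : F} {v : V} : v ∈ eigSp f α ↔ f v = α • v := by
  simp [eigSp, sub_eq_zero]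

theorem eigSp_restrict {f : V →ₗ[F] V} {U : Submodule F V} (hU : ∀ u ∈ U, f u ∈ U) (α : F) :
    eigSp (f.restrict hU) α = (eigSp f α).comap U.subtype := by
  ext u
  simp [mem_eigSp, Subtype.ext_iff, LinearMap.restrict_apply]

theorem det_eq_det_quotMap_one [FiniteDimensional F V] (f : V →ₗ[F] V) :
    LinearMap.det f = LinearMap.det (quotMap f 1) := by
  have hf : ∀ v ∈ eigSp f 1, f v ∈ eigSp f 1 := fun v hv => by
    rw [mem_eigSp, one_smul] at hv ⊢
    rw [hv, hv]
  have hid : f.restrict hf = LinearMap.id :=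
    LinearMap.ext fun v => Subtype.ext (by simpa using mem_eigSp.mp v.2)
  rw [LinearMap.det_eq_det_mul_det (eigSp f 1) f hf, hid, LinearMap.det_id, one_mul]
  rfl

theorem det_quotMap_restrict {f : V →ₗ[F] V} {U : Submodule F V} (hU : ∀ u ∈ U, f u ∈ U)
    {α : F} (hsup : U ⊔ eigSp f α = ⊤) :
    LinearMap.det (quotMap (f.restrict hU) α) = LinearMap.det (quotMap f α) := by
  let i := (eigSp (f.restrict hU) α).mapQ (eigSp f α) U.subtype (eigSp_restrict hU α).le
  have hi : Function.Bijective i := by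
    constructor
    · rw [← LinearMap.ker_eq_bot, Submodule.ker_mapQ, ← eigSp_restrict hU, Submodule.mkQ_map_self]
    · intro x
      obtain ⟨v, rfl⟩ := Submodule.mkQ_surjective _ x
      obtain ⟨u, hu, w, hw, rfl⟩ := Submodule.mem_sup.mp (hsup ▸ Submodule.mem_top (x := v))
      refine ⟨Submodule.Quotient.mk ⟨u, hu⟩, ?_⟩
      simpa [i, Submodule.Quotient.eq] using Submodule.neg_mem _ hw
  let e := LinearEquiv.ofBijective i hi
  have hconj : quotMap f α ∘ₗ e = e ∘ₗ quotMap (f.restrict hU) α := by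
    ext
    rfl
  rw [(LinearEquiv.eq_comp_toLinearMap_symm _ _).mpr hconj, LinearMap.comp_assoc,
    LinearMap.det_conj]

end Eigenspace

namespace CliffordAlgebra

variable {F V : Type*} [Field F] [AddCommGroup V] [Module F V] {Q : QuadraticForm F V}

theorem ι_mul_ι_eq_ι_neg_reflection_mul {r : V} (hr : Q r ≠ 0) (x : V) :
    ι Q r * ι Q x = ι Q (-Q.reflection r x) * ι Q r := by
  have hc : (Q r)⁻¹ * QuadraticMap.polar Q r x * Q r = QuadraticMap.polar Q r x := by
    field_simp
  rw [QuadraticMap.reflection_apply, neg_sub, map_sub, map_smul, sub_mul, smul_mul_assoc,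
    ι_sq_scalar, Algebra.smul_def, ← map_mul (algebraMap F (CliffordAlgebra Q)), hc,
    ← ι_mul_ι_add_swap, add_sub_cancel_right]

theorem prod_ι_mul_ι {l : List V} (hl : ∀ r ∈ l, Q r ≠ 0) (x : V) :
    (l.map (ι Q)).prod * ι Q x =
      ι Q ((-1 : F) ^ l.length • (l.map Q.reflection).prod x) * (l.map (ι Q)).prod := by
  induction l with
  | nil => simp
  | cons r l ih =>
    simp only [List.map_cons, List.prod_cons, List.length_cons, Module.End.mul_apply]
    rw [mul_assoc, ih fun r' hr' => hl r' (by simp [hr']), ← mul_assoc,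
      ι_mul_ι_eq_ι_neg_reflection_mul (hl r (by simp)), mul_assoc, map_smul, pow_succ,
      mul_neg_one, neg_smul]

theorem isUnit_prod_ι {l : List V} (hl : ∀ r ∈ l, Q r ≠ 0) : IsUnit (l.map (ι Q)).prod :=
  List.prod_isUnit fun x hx => by
    obtain ⟨r, hr, rfl⟩ := List.mem_map.mp hx
    exact isUnit_ι_of_isUnit Q (hl r hr).isUnit

theorem prod_ι_mem_adjoin {U : Submodule F V} (l : List U) :
    ((l.map U.subtype).map (ι Q)).prod ∈ Algebra.adjoin F (ι Q '' U) :=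
  Subalgebra.list_prod_mem _ fun x hx => by
    obtain ⟨r, hr, rfl⟩ := List.mem_map.mp hx
    obtain ⟨r, -, rfl⟩ := List.mem_map.mp hr
    exact Algebra.subset_adjoin ⟨r, r.2, rfl⟩

theorem apply_mul_eq_mul_of_forall_ι (θ : CliffordAlgebra Q →ₐ[F] CliffordAlgebra Q)
    {g : CliffordAlgebra Q} (h : ∀ v, θ (ι Q v) * g = g * ι Q v) (x : CliffordAlgebra Q) :
    θ x * g = g * x := by
  induction x using CliffordAlgebra.induction with
  | algebraMap c => rw [AlgHom.commutes]; exact Algebra.commutes c g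
  | ι v => exact h v
  | mul a b ha hb => rw [map_mul, mul_assoc, hb, ← mul_assoc, ha, mul_assoc]
  | add a b ha hb => rw [map_add, add_mul, ha, hb, mul_add]

end CliffordAlgebra

open QuadraticMap CliffordAlgebra in
theorem bogolyubov_fixes_centralizer_general
    {F V : Type*} [Field F] [AddCommGroup V] [Module F V]
    (hchar : (2 : F) ≠ 0)
    (Q : QuadraticForm F V)
    (φ : V →ₗ[F] V)
    (hφQ : ∀ v : V, Q (φ v) = Q v)
    (θ : CliffordAlgebra Q ≃ₐ[F] CliffordAlgebra Q)
    (hθ : ∀ v : V, θ (CliffordAlgebra.ι Q v) = CliffordAlgebra.ι Q (φ v))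
    (V' : Submodule F V) (hV'fd : FiniteDimensional F V')
    (hV'inv : ∀ u ∈ V', φ u ∈ V')
    (hV'nd : ∀ u ∈ V', (∀ w ∈ V', QuadraticMap.polar Q u w = 0) → u = 0)
    (hperp : ∀ w : V, (∀ u ∈ V', QuadraticMap.polar Q w u = 0) → w ∈ eigSp φ 1)
    (hdet : LinearMap.det (quotMap φ 1) = 1) :
    ∀ z ∈ Subalgebra.centralizer F
        ((Algebra.adjoin F (CliffordAlgebra.ι Q '' (V' : Set V))) :
          Set (CliffordAlgebra Q)),
      θ z = z := by
  intro z hz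
  have hnd : (polarBilin (Q.restrict V')).SeparatingLeft := fun u hu =>
    Subtype.ext (hV'nd u u.2 fun w hw => hu ⟨w, hw⟩)
  have hcompl := isCompl_orthogonalBilin_polarBilin hnd
  have horth : V'.orthogonalBilin (polarBilin Q) ≤ eigSp φ 1 := fun w hw =>
    hperp w fun u hu => (polar_comm Q w u).trans (hw u hu)
  have hfix : ∀ w ∈ V'.orthogonalBilin (polarBilin Q), φ w = w := fun w hw => by
    simpa using mem_eigSp.mp (horth hw)
  obtain ⟨l, hl, hlφ⟩ := exists_prod_reflection_eq hchar hnd (σ := φ.restrict hV'inv)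
    fun u => hφQ u
  have hsign : (-1 : F) ^ l.length = 1 := by
    rw [← det_prod_reflection hl, hlφ, det_eq_det_quotMap_one, det_quotMap_restrict hV'inv
      (eq_top_mono (sup_le_sup_left horth _) hcompl.sup_eq_top), hdet]
  have hφ := prod_reflection_map_subtype_eq hcompl.codisjoint le_rfl hV'inv hfix hlφ
  have hl' : ∀ r ∈ l.map V'.subtype, Q r ≠ 0 := by simpa using hl
  set g := ((l.map V'.subtype).map (ι Q)).prod
  have hθg : ∀ x, θ x * g = g * x :=
    apply_mul_eq_mul_of_forall_ι (θ : CliffordAlgebra Q →ₐ[F] CliffordAlgebra Q) fun v => by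
      rw [AlgEquiv.coe_toAlgHom, hθ, prod_ι_mul_ι hl', List.length_map, hsign, one_smul, hφ]
  exact (isUnit_prod_ι hl').mul_right_cancel (by rw [hθg, hz g (prod_ι_mem_adjoin l)])

/-- Suppose `V' ⊆ V` is a `φ`-invariant nondegenerate finite-dimensional subspace
of even dimension with `V'^⊥ ⊆ V(1)` and `det (φ|_{V/V(1)}) = 1`.  Then the
Bogolyubov automorphism `[φ]` fixes every element of the centralizer of the
subalgebra of `Cl(V, Q)` generated by `ι(V')`. -/
theorem bogolyubov_fixes_centralizer
    {F V : Type*} [Field F] [AddCommGroup V] [Module F V]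
    (hchar : (2 : F) ≠ 0)
    (Q : QuadraticForm F V)
    (hQ : ∀ v : V, (∀ w : V, QuadraticMap.polar Q v w = 0) → v = 0)
    (φ : V →ₗ[F] V) (hφbij : Function.Bijective φ)
    (hφQ : ∀ v : V, Q (φ v) = Q v)
    (θ : CliffordAlgebra Q ≃ₐ[F] CliffordAlgebra Q)
    (hθ : ∀ v : V, θ (CliffordAlgebra.ι Q v) = CliffordAlgebra.ι Q (φ v))
    (V' : Submodule F V) (hV'fd : FiniteDimensional F V')
    (hV'even : Even (Module.finrank F V'))
    (hV'inv : ∀ u ∈ V', φ u ∈ V')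
    (hV'nd : ∀ u ∈ V', (∀ w ∈ V', QuadraticMap.polar Q u w = 0) → u = 0)
    (hperp : ∀ w : V, (∀ u ∈ V', QuadraticMap.polar Q w u = 0) → w ∈ eigSp φ 1)
    (hfin : FiniteDimensional F (V ⧸ eigSp φ 1))
    (hdet : LinearMap.det (quotMap φ 1) = 1) :
    ∀ z ∈ Subalgebra.centralizer F
        ((Algebra.adjoin F (CliffordAlgebra.ι Q '' (V' : Set V))) :
          Set (CliffordAlgebra Q)),
      θ z = z :=
  bogolyubov_fixes_centralizer_general hchar Q φ hφQ θ hθ V' hV'fd hV'inv hV'nd hperp hdet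
end

section
/- Let F be a field of characteristic ≠ 2 and V an infinite-dimensional vector space over F with a nondegenerate quadratic form Q. Then for every element x of the Clifford algebra Cl(V,Q) there exists a finite-dimensional, even-dimensional, nondegenerate subspace V' ⊆ V such that x lies in the unital subalgebra of Cl(V,Q) generated by ι(V'). -/
/-!
Every element of the Clifford algebra is a polynomial in finitely many generators `ι v`, so it
lies in the subalgebra generated by some finite-dimensional `U`, and it suffices to enlarge `U`.
Since `Q` is nondegenerate on `V`, a nonzero vector of the radical `U ∩ U^⊥` pairs nontrivially
with some `w`, and adjoining `w` strictly shrinks the radical; so `U` grows into a nondegenerate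
subspace. If that subspace is odd-dimensional, its orthogonal complement is a nonzero
(`V` is infinite-dimensional) nondegenerate subspace, hence contains an anisotropic vector;
adjoining it preserves nondegeneracy (as `2 ≠ 0`) and makes the dimension even.
-/

open Module QuadraticMap LinearMap.BilinForm

theorem CliffordAlgebra.exists_finset_mem_adjoin_ι {R M : Type*} [CommRing R] [AddCommGroup M]
    [Module R M] {Q : QuadraticForm R M} (x : CliffordAlgebra Q) :
    ∃ s : Finset M, x ∈ Algebra.adjoin R (ι Q '' s) := by
  classical
  let A : Finset M → Subalgebra R (CliffordAlgebra Q) := fun s ↦ Algebra.adjoin R (ι Q '' s)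
  have hdir : Directed (· ≤ ·) A :=
    Monotone.directed_le fun s t hst ↦ Algebra.adjoin_mono (Set.image_mono hst)
  have hle : Algebra.adjoin R (Set.range (ι Q)) ≤ ⨆ s, A s :=
    Algebra.adjoin_le <| Set.range_subset_iff.mpr fun v ↦
      le_iSup A {v} <| Algebra.subset_adjoin ⟨v, by simp, rfl⟩
  rw [adjoin_range_ι, top_le_iff] at hle
  have hx : x ∈ ((⨆ s, A s : Subalgebra R _) : Set (CliffordAlgebra Q)) := by simp [hle]
  simpa [Subalgebra.coe_iSup_of_directed hdir] using hx

theorem Submodule.finrank_sup_span_singleton_of_finiteDimensional {K V : Type*} [DivisionRing K]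
    [AddCommGroup V] [Module K V] {p : Submodule K V} [FiniteDimensional K p] {v : V}
    (hv : v ∉ p) : finrank K ↥(p ⊔ K ∙ v) = finrank K p + 1 := by
  have h := finrank_sup_add_finrank_inf_eq p (K ∙ v)
  rwa [(disjoint_span_singleton_of_notMem hv).eq_bot, finrank_bot, add_zero,
    finrank_span_singleton (K := K) (by rintro rfl; exact hv p.zero_mem)] at h

theorem QuadraticMap.exists_mem_ne_zero_of_polar_ne_zero {R M N : Type*} [CommRing R]
    [AddCommGroup M] [Module R M] [AddCommGroup N] [Module R N] {Q : QuadraticMap R M N}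
    {W : Submodule R M} {x y : M} (hx : x ∈ W) (hy : y ∈ W) (hxy : polar Q x y ≠ 0) :
    ∃ z ∈ W, Q z ≠ 0 := by
  by_contra! h
  exact hxy (by simp [polar, h x hx, h y hy, h _ (W.add_mem hx hy)])

namespace QuadraticForm

variable {F V : Type*} [Field F] [AddCommGroup V] [Module F V] (Q : QuadraticForm F V)

def PolarNondegenerateOn (U : Submodule F V) : Prop :=
  ∀ u ∈ U, (∀ w ∈ U, polar Q u w = 0) → u = 0

variable {Q}

theorem mem_orthogonal_polarBilin_iff {U : Submodule F V} {x : V} :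
    x ∈ orthogonal Q.polarBilin U ↔ ∀ u ∈ U, polar Q x u = 0 :=
  forall₂_congr fun u _ ↦ by rw [polar_comm]; rfl

theorem inf_orthogonal_sup_span_singleton_lt {U : Submodule F V} {u w : V}
    (hu : u ∈ U ⊓ orthogonal Q.polarBilin U) (huw : polar Q u w ≠ 0) :
    (U ⊔ F ∙ w) ⊓ orthogonal Q.polarBilin (U ⊔ F ∙ w) < U ⊓ orthogonal Q.polarBilin U := by
  have hw : w ∈ U ⊔ F ∙ w := Submodule.mem_sup_right (Submodule.mem_span_singleton_self w)
  refine lt_of_le_of_ne ?_ fun h ↦ ?_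
  · rintro x ⟨hxU, hxO⟩
    obtain ⟨y, hy, z, hz, rfl⟩ := Submodule.mem_sup.mp hxU
    obtain ⟨c, rfl⟩ := Submodule.mem_span_singleton.mp hz
    have huy : polar Q u y = 0 := mem_orthogonal_polarBilin_iff.mp hu.2 y hy
    have hc : c = 0 := by simpa [huy, huw] using hxO u (Submodule.mem_sup_left hu.1)
    rw [hc, zero_smul, add_zero] at hxO ⊢
    exact ⟨hy, orthogonal_le le_sup_left hxO⟩
  · exact huw (mem_orthogonal_polarBilin_iff.mp (h ▸ hu).2 w hw)

theorem exists_le_polarNondegenerateOn (hQ : ∀ v : V, (∀ w : V, polar Q v w = 0) → v = 0)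
    (U : Submodule F V) [FiniteDimensional F U] :
    ∃ U' : Submodule F V, U ≤ U' ∧ FiniteDimensional F U' ∧ Q.PolarNondegenerateOn U' := by
  induction h : finrank F ↥(U ⊓ orthogonal Q.polarBilin U) using Nat.strong_induction_on
    generalizing U with
  | _ n ih =>
  by_cases hU : Q.PolarNondegenerateOn U
  · exact ⟨U, le_rfl, inferInstance, hU⟩
  obtain ⟨u, huU, hu, hu0⟩ : ∃ u ∈ U, (∀ w ∈ U, polar Q u w = 0) ∧ u ≠ 0 := by
    simpa [PolarNondegenerateOn] using hU
  obtain ⟨w, huw⟩ : ∃ w, polar Q u w ≠ 0 := by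
    by_contra! h
    exact hu0 (hQ u h)
  have hlt :=
    inf_orthogonal_sup_span_singleton_lt ⟨huU, mem_orthogonal_polarBilin_iff.mpr hu⟩ huw
  obtain ⟨U', hle, hfin, hnd⟩ :=
    ih _ (h ▸ Submodule.finrank_lt_finrank_of_lt hlt) (U ⊔ F ∙ w) rfl
  exact ⟨U', le_sup_left.trans hle, hfin, hnd⟩

theorem sup_orthogonal_eq_top {U : Submodule F V} [FiniteDimensional F U]
    (hU : Q.PolarNondegenerateOn U) : U ⊔ orthogonal Q.polarBilin U = ⊤ := by
  let φ : U →ₗ[F] Dual F U := LinearMap.BilinForm.restrict Q.polarBilin U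
  have hinj : Function.Injective φ := LinearMap.ker_eq_bot.mp <| LinearMap.ker_eq_bot'.mpr
    fun u hu ↦ Subtype.ext <| hU u u.2 fun w hw ↦ LinearMap.congr_fun hu ⟨w, hw⟩
  have hsurj : Function.Surjective φ :=
    (LinearMap.injective_iff_surjective_of_finrank_eq_finrank Subspace.dual_finrank_eq.symm).mp hinj
  refine eq_top_iff.mpr fun v _ ↦ ?_
  obtain ⟨u, hu⟩ := hsurj ((Q.polarBilin v).domRestrict U)
  refine Submodule.mem_sup.mpr ⟨u, u.2, v - u, ?_, add_sub_cancel _ _⟩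
  refine mem_orthogonal_polarBilin_iff.mpr fun w hw ↦ ?_
  have huw : polar Q u w = polar Q v w := LinearMap.congr_fun hu ⟨w, hw⟩
  rw [polar_sub_left, huw, sub_self]

theorem exists_anisotropic_mem_orthogonal (hQ : ∀ v : V, (∀ w : V, polar Q v w = 0) → v = 0)
    (hV : ¬ FiniteDimensional F V) {U : Submodule F V} [FiniteDimensional F U]
    (hU : Q.PolarNondegenerateOn U) : ∃ w ∈ orthogonal Q.polarBilin U, Q w ≠ 0 := by
  have hsup := sup_orthogonal_eq_top hU
  obtain ⟨x, hx, hx0⟩ : ∃ x ∈ orthogonal Q.polarBilin U, x ≠ 0 := by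
    refine Submodule.exists_mem_ne_zero_of_ne_bot fun h ↦ hV ?_
    rw [h, sup_bot_eq] at hsup
    subst hsup
    exact Submodule.topEquiv.finiteDimensional
  obtain ⟨v, hxv⟩ : ∃ v, polar Q x v ≠ 0 := by
    by_contra! h
    exact hx0 (hQ x h)
  obtain ⟨a, ha, y, hy, rfl⟩ := Submodule.mem_sup.mp (hsup ▸ Submodule.mem_top : v ∈ _)
  rw [polar_add_right, mem_orthogonal_polarBilin_iff.mp hx a ha, zero_add] at hxv
  exact exists_mem_ne_zero_of_polar_ne_zero hx hy hxv

theorem polarNondegenerateOn_sup_span_singleton {U : Submodule F V}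
    (hU : Q.PolarNondegenerateOn U) {w : V} (hw : w ∈ orthogonal Q.polarBilin U)
    (hww : polar Q w w ≠ 0) : Q.PolarNondegenerateOn (U ⊔ F ∙ w) := by
  intro x hx hxO
  obtain ⟨y, hy, z, hz, rfl⟩ := Submodule.mem_sup.mp hx
  obtain ⟨c, rfl⟩ := Submodule.mem_span_singleton.mp hz
  have hyw : polar Q y w = 0 := by rw [polar_comm]; exact mem_orthogonal_polarBilin_iff.mp hw y hy
  have hc : c * polar Q w w = 0 := by
    simpa only [polar_add_left, polar_smul_left, hyw, zero_add, smul_eq_mul] using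
      hxO w (Submodule.mem_sup_right (Submodule.mem_span_singleton_self w))
  rw [(mul_eq_zero.mp hc).resolve_right hww, zero_smul, add_zero] at hxO ⊢
  exact hU y hy fun v hv ↦ hxO v (Submodule.mem_sup_left hv)

theorem exists_le_polarNondegenerateOn_even_finrank (hchar : (2 : F) ≠ 0)
    (hQ : ∀ v : V, (∀ w : V, polar Q v w = 0) → v = 0) (hV : ¬ FiniteDimensional F V)
    (U : Submodule F V) [FiniteDimensional F U] :
    ∃ U' : Submodule F V, U ≤ U' ∧ FiniteDimensional F U' ∧ Even (finrank F U') ∧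
      Q.PolarNondegenerateOn U' := by
  obtain ⟨U₁, hUU₁, hfin, hnd⟩ := exists_le_polarNondegenerateOn hQ U
  by_cases he : Even (finrank F U₁)
  · exact ⟨U₁, hUU₁, hfin, he, hnd⟩
  obtain ⟨w, hw, hQw⟩ := exists_anisotropic_mem_orthogonal hQ hV hnd
  have hww : polar Q w w ≠ 0 := by
    rw [polar_self, nsmul_eq_mul, Nat.cast_ofNat]
    exact mul_ne_zero hchar hQw
  have hwU₁ : w ∉ U₁ := fun h ↦ hww (mem_orthogonal_polarBilin_iff.mp hw w h)
  refine ⟨U₁ ⊔ F ∙ w, hUU₁.trans le_sup_left, inferInstance, ?_,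
    polarNondegenerateOn_sup_span_singleton hnd hw hww⟩
  rw [Submodule.finrank_sup_span_singleton_of_finiteDimensional hwU₁]
  exact (Nat.not_even_iff_odd.mp he).add_one

end QuadraticForm

/-- Every element of the Clifford algebra of an infinite-dimensional vector space
with a nondegenerate quadratic form lies in the unital subalgebra generated by
`ι(V')` for some finite-dimensional, even-dimensional, nondegenerate subspace
`V' ⊆ V`. -/
theorem mem_adjoin_of_even_nondeg_subspace
    {F V : Type*} [Field F] [AddCommGroup V] [Module F V]
    (hchar : (2 : F) ≠ 0) (hV : ¬ FiniteDimensional F V)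
    (Q : QuadraticForm F V)
    (hQ : ∀ v : V, (∀ w : V, QuadraticMap.polar Q v w = 0) → v = 0) :
    ∀ x : CliffordAlgebra Q, ∃ V' : Submodule F V,
      FiniteDimensional F V' ∧ Even (Module.finrank F V') ∧
      (∀ u ∈ V', (∀ w ∈ V', QuadraticMap.polar Q u w = 0) → u = 0) ∧
      x ∈ Algebra.adjoin F (CliffordAlgebra.ι Q '' (V' : Set V)) := by
  intro x
  obtain ⟨s, hxs⟩ := CliffordAlgebra.exists_finset_mem_adjoin_ι x
  obtain ⟨V', hsV', hfin, heven, hnd⟩ :=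
    QuadraticForm.exists_le_polarNondegenerateOn_even_finrank hchar hQ hV (Submodule.span F s)
  exact ⟨V', hfin, heven, hnd,
    Algebra.adjoin_mono (Set.image_mono (Submodule.subset_span.trans hsV')) hxs⟩
end
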